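/- arXiv:2311.18796 — 10 statements merged into one kernel-verified Lean document; each statement's English description precedes it below -/
import Mathlib

section
/- If n is sufficiently large, then every 2-coloring of {2,...,n} contains a monochromatic product Schur triple, i.e., elements a, b, c (not necessarily distinct) of the same color with a*b = c. -/
/-!
The powers `2, 4, …, 32` turn products into sums of exponents, so it suffices that every
2-colouring of `{1, …, 5}` has a monochromatic solution of `x + y = z` (the Schur number
`S(2) = 4`): colour the exponent `k` by the colour of `2 ^ k`.
-/

lemma Fin.eq_of_ne_of_ne_two {x y z : Fin 2} (hxy : x ≠ y) (hzy : z ≠ y) : x = z := by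
  omega

theorem exists_monochromatic_add_le_five (c : ℕ → Fin 2) :
    ∃ x y : ℕ, 1 ≤ x ∧ 1 ≤ y ∧ x + y ≤ 5 ∧ c x = c y ∧ c y = c (x + y) := by
  by_cases h12 : c 1 = c 2
  · exact ⟨1, 1, le_rfl, le_rfl, by norm_num, rfl, h12⟩
  by_cases h24 : c 2 = c 4
  · exact ⟨2, 2, by norm_num, by norm_num, by norm_num, rfl, h24⟩
  have h14 : c 1 = c 4 := Fin.eq_of_ne_of_ne_two h12 (Ne.symm h24)
  by_cases h23 : c 2 = c 3
  · by_cases h25 : c 2 = c 5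
    · exact ⟨2, 3, by norm_num, by norm_num, by norm_num, h23, h23.symm.trans h25⟩
    · have h15 : c 1 = c 5 := Fin.eq_of_ne_of_ne_two h12 (Ne.symm h25)
      exact ⟨1, 4, le_rfl, by norm_num, by norm_num, h14, h14.symm.trans h15⟩
  · have h13 : c 1 = c 3 := Fin.eq_of_ne_of_ne_two h12 (Ne.symm h23)
    exact ⟨1, 3, le_rfl, by norm_num, by norm_num, h13, h13.symm.trans h14⟩

/-- If `n` is sufficiently large, every 2-colouring of `{2,...,n}` contains a
monochromatic product Schur triple. -/
theorem stmt0 :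
    ∃ N : ℕ, ∀ n : ℕ, N ≤ n → ∀ χ : ℕ → Fin 2,
      ∃ a ∈ Finset.Icc 2 n, ∃ b ∈ Finset.Icc 2 n, ∃ c ∈ Finset.Icc 2 n,
        a * b = c ∧ χ a = χ b ∧ χ b = χ c := by
  refine ⟨2 ^ 5, fun n hn χ => ?_⟩
  obtain ⟨x, y, hx, hy, hxy, hcxy, hcyz⟩ := exists_monochromatic_add_le_five (fun k => χ (2 ^ k))
  have mem : ∀ k, 1 ≤ k → k ≤ 5 → 2 ^ k ∈ Finset.Icc 2 n := fun k hk1 hk5 =>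
    Finset.mem_Icc.2 ⟨Nat.le_self_pow (by omega) 2,
      (Nat.pow_le_pow_right (by norm_num) hk5).trans hn⟩
  exact ⟨2 ^ x, mem x hx (by omega), 2 ^ y, mem y hy (by omega), 2 ^ (x + y),
    mem (x + y) (by omega) hxy, (pow_add 2 x y).symm, hcxy, hcyz⟩
end

section
/- For every ε > 0 there exists N such that for all n ≥ N, every integer m with 2 ≤ m ≤ n has at most n^ε divisors. -/
/-!
Writing `m = ∏ p ^ aₚ`, the number of divisors is `∏ (aₚ + 1)`. Fix `k ≥ 1`. For `p ≥ 2 ^ k`,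
`a + 1 ≤ 2 ^ a ≤ p ^ (a / k)`; for each of the fewer than `2 ^ k` smaller primes,
`a + 1 ≤ k * 2 ^ (a / k) ≤ k * p ^ (a / k)`. Hence `d(m) ≤ k ^ 2 ^ k * m ^ (1 / k)`, and once
`1 / k < ε` the constant `k ^ 2 ^ k` is absorbed by `n ^ (ε - 1 / k)` for large `n`.
-/

open Finset Filter

namespace Nat

lemma add_one_le_mul_two_rpow_div {k : ℕ} (hk : k ≠ 0) (a : ℕ) :
    (a : ℝ) + 1 ≤ k * 2 ^ ((a : ℝ) / k) := by
  have hdiv : a + 1 ≤ k * 2 ^ (a / k) :=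
    (Nat.lt_mul_div_succ a (Nat.pos_of_ne_zero hk)).trans_le
      (Nat.mul_le_mul_left _ Nat.lt_two_pow_self)
  calc (a : ℝ) + 1 ≤ k * 2 ^ (a / k) := by exact_mod_cast hdiv
    _ = k * 2 ^ ((a / k : ℕ) : ℝ) := by rw [Real.rpow_natCast]
    _ ≤ k * 2 ^ ((a : ℝ) / k) := by
      gcongr
      exacts [one_le_two, Nat.cast_div_le]

lemma add_one_le_rpow_div_of_two_pow_le {k p : ℕ} (hk : k ≠ 0) (hp : 2 ^ k ≤ p) (a : ℕ) :
    (a : ℝ) + 1 ≤ p ^ ((a : ℝ) / k) :=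
  calc (a : ℝ) + 1 ≤ 2 ^ a := by exact_mod_cast Nat.lt_two_pow_self
    _ = ((2 : ℝ) ^ k) ^ ((a : ℝ) / k) := by
      rw [← Real.rpow_natCast_mul zero_le_two, mul_div_cancel₀ _ (by positivity),
        Real.rpow_natCast]
    _ ≤ p ^ ((a : ℝ) / k) := by gcongr; exact_mod_cast hp

lemma add_one_le_ite_mul_rpow_div {k p : ℕ} (hk : k ≠ 0) (hp : 2 ≤ p) (a : ℕ) :
    (a : ℝ) + 1 ≤ (if p < 2 ^ k then (k : ℝ) else 1) * p ^ ((a : ℝ) / k) := by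
  split_ifs with hsmall
  · refine (add_one_le_mul_two_rpow_div hk a).trans ?_
    gcongr
    exact_mod_cast hp
  · rw [one_mul]
    exact add_one_le_rpow_div_of_two_pow_le hk (not_lt.1 hsmall) a

lemma prod_rpow_factorization_div {m : ℕ} (hm : m ≠ 0) (k : ℕ) :
    ∏ p ∈ m.primeFactors, (p : ℝ) ^ ((m.factorization p : ℝ) / k) = (m : ℝ) ^ ((k : ℝ)⁻¹) := by
  simp_rw [div_eq_mul_inv, Real.rpow_natCast_mul (Nat.cast_nonneg _)]
  rw [Real.finsetProd_rpow _ _ (fun p _ => by positivity)]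
  congr 1
  exact_mod_cast Nat.prod_factorization_pow_eq_self hm

lemma prod_ite_lt_two_pow_le {k : ℕ} (hk : k ≠ 0) (m : ℕ) :
    ∏ p ∈ m.primeFactors, (if p < 2 ^ k then (k : ℝ) else 1) ≤ k ^ 2 ^ k := by
  rw [← prod_filter, prod_const]
  refine pow_le_pow_right₀ (one_le_cast.2 (pos_of_ne_zero hk)) ?_
  exact (card_le_card fun p hp => mem_range.2 (mem_filter.1 hp).2).trans (card_range _).le

theorem card_divisors_le_mul_rpow {k : ℕ} (hk : k ≠ 0) (m : ℕ) :
    (#m.divisors : ℝ) ≤ k ^ 2 ^ k * (m : ℝ) ^ ((k : ℝ)⁻¹) := by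
  rcases eq_or_ne m 0 with rfl | hm
  · simp only [divisors_zero, card_empty, CharP.cast_eq_zero]
    positivity
  rw [card_divisors hm, ← prod_rpow_factorization_div hm k]
  push_cast
  calc ∏ p ∈ m.primeFactors, ((m.factorization p : ℝ) + 1)
      ≤ ∏ p ∈ m.primeFactors,
          (if p < 2 ^ k then (k : ℝ) else 1) * p ^ ((m.factorization p : ℝ) / k) :=
        prod_le_prod (fun _ _ => by positivity) fun p hp =>
          add_one_le_ite_mul_rpow_div hk (prime_of_mem_primeFactors hp).two_le _
    _ ≤ k ^ 2 ^ k * ∏ p ∈ m.primeFactors, (p : ℝ) ^ ((m.factorization p : ℝ) / k) := by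
      rw [prod_mul_distrib]
      gcongr
      exact prod_ite_lt_two_pow_le hk m

theorem eventually_card_divisors_le_rpow {ε : ℝ} (hε : 0 < ε) :
    ∀ᶠ n : ℕ in atTop, ∀ m ≤ n, (#m.divisors : ℝ) ≤ n ^ ε := by
  obtain ⟨j, hj⟩ := exists_nat_one_div_lt hε
  set k := j + 1
  have hkε : (k : ℝ)⁻¹ < ε := by simpa [k] using hj
  have hC : ∀ᶠ n : ℕ in atTop, (k : ℝ) ^ 2 ^ k ≤ (n : ℝ) ^ (ε - (k : ℝ)⁻¹) :=
    ((tendsto_rpow_atTop (sub_pos.2 hkε)).comp tendsto_natCast_atTop_atTop).eventually_ge_atTop _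
  filter_upwards [hC, eventually_ge_atTop 1] with n hCn hn m hmn
  calc (#m.divisors : ℝ) ≤ k ^ 2 ^ k * (m : ℝ) ^ ((k : ℝ)⁻¹) :=
        card_divisors_le_mul_rpow j.succ_ne_zero m
    _ ≤ (n : ℝ) ^ (ε - (k : ℝ)⁻¹) * (n : ℝ) ^ ((k : ℝ)⁻¹) := by gcongr
    _ = (n : ℝ) ^ ε := by
      rw [← Real.rpow_add (by positivity), sub_add_cancel]

end Nat

/-- For every `ε > 0` there is `N` such that for all `n ≥ N` every `2 ≤ m ≤ n`
has at most `n^ε` divisors. -/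
theorem stmt4 (ε : ℝ) (hε : 0 < ε) :
    ∃ N : ℕ, ∀ n : ℕ, N ≤ n → ∀ m : ℕ, 2 ≤ m → m ≤ n →
      (m.divisors.card : ℝ) ≤ (n : ℝ) ^ ε := by
  obtain ⟨N, hN⟩ := eventually_atTop.1 (Nat.eventually_card_divisors_le_rpow hε)
  exact ⟨N, fun n hn m _ hmn => hN n hn m hmn⟩
end

section
/- For sufficiently large n, every subset A of {2,...,n} with |A| ≥ n - √n/2 contains at least n/8 triples (a,b,c) ∈ A³ with a*b = c. -/
/-!
For `a ∈ A ∩ [2, √n]`, every `b ∈ [2, n/a]` either is a partner (`b ∈ A`, `a * b ∈ A`),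
or is missing from `A`, or has `a * b` missing from `A`; with `m = |[2, n] \ A| ≤ √n/2 - 1`
this gives at least `n/a - 2 - 2m` partners. Since at most `m` integers of `[2, √n]` are
missing, the sum of `n/a - 2 - 2m` over `A ∩ [2, √n]` is at least its sum over `[m + 2, √n]`,
which the integral comparison bounds by `n (log 2 - 2/√n) - n/2 ≥ n/8`.
-/

open Finset Real

theorem sum_Ico_sub_card_le_sum_of_antitoneOn {f : ℕ → ℝ} {k K : ℕ} {S : Finset ℕ}
    (hf : AntitoneOn f (Set.Ico k K)) (hS : S ⊆ Ico k K) :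
    ∑ i ∈ Ico (K - #S) K, f i ≤ ∑ a ∈ S, f a := by
  induction S using Finset.induction_on_min generalizing k with
  | empty => simp
  | insert a S ha ih =>
    have haS : a ∉ S := fun h => lt_irrefl a (ha a h)
    have haK : a ∈ Ico k K := hS (mem_insert_self a S)
    have hSa : S ⊆ Ico (a + 1) K := fun b hb =>
      mem_Ico.2 ⟨ha b hb, (mem_Ico.1 (hS (mem_insert_of_mem hb))).2⟩
    have hcard : #S ≤ K - (a + 1) := by simpa using card_le_card hSa
    rw [mem_Ico] at haK
    rw [sum_insert haS, card_insert_of_notMem haS, sum_eq_sum_Ico_succ_bot (by omega),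
      show K - (#S + 1) + 1 = K - #S by omega]
    exact add_le_add (hf (by simpa using haK) (by simp only [Set.mem_Ico]; omega) (by omega))
      (ih (hf.mono (Set.Ico_subset_Ico_left (by omega))) hSa)

theorem log_sub_log_le_sum_Ico_inv {k K : ℕ} (hk : 1 ≤ k) (hkK : k ≤ K) :
    log K - log k ≤ ∑ i ∈ Ico k K, (i : ℝ)⁻¹ := by
  have hk0 : (0 : ℝ) < k := by exact_mod_cast hk
  have hkK' : (k : ℝ) ≤ K := by exact_mod_cast hkK
  calc log K - log k = ∫ x in (k : ℝ)..K, x⁻¹ := by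
        rw [integral_inv (Set.notMem_uIcc_of_lt hk0 (hk0.trans_le hkK')),
          log_div (hk0.trans_le hkK').ne' hk0.ne']
    _ ≤ _ := (inv_antitoneOn_Icc_right hk0).integral_le_sum_Ico hkK

theorem div_le_card_filter_mul_mem_add {n a : ℕ} {A : Finset ℕ} (ha : 0 < a) :
    n / a ≤ #{b ∈ A | a * b ∈ A} + 2 * #(Icc 2 n \ A) + 1 := by
  set M := Icc 2 n \ A
  have hcover :
      Icc 2 (n / a) ⊆ {b ∈ A | a * b ∈ A} ∪ M ∪ {b ∈ Icc 2 (n / a) | a * b ∈ M} := by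
    intro b hb
    have hab : a * b ≤ n := (Nat.mul_le_mul_left a (mem_Icc.1 hb).2).trans (Nat.mul_div_le n a)
    have hbn : b ≤ n := (Nat.le_mul_of_pos_left b ha).trans hab
    simp only [M, mem_union, mem_filter, mem_sdiff, mem_Icc] at hb ⊢
    by_cases hbA : b ∈ A
    · by_cases habA : a * b ∈ A
      · exact .inl (.inl ⟨hbA, habA⟩)
      · exact .inr ⟨hb, ⟨by nlinarith, hab⟩, habA⟩
    · exact .inl (.inr ⟨⟨hb.1, hbn⟩, hbA⟩)
  have hpre : #{b ∈ Icc 2 (n / a) | a * b ∈ M} ≤ #M :=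
    card_le_card_of_injOn (a * ·) (fun b hb => (mem_filter.1 hb).2)
      (fun _ _ _ _ h => Nat.eq_of_mul_eq_mul_left ha h)
  have h₁ := card_le_card hcover
  have h₂ := card_union_le ({b ∈ A | a * b ∈ A} ∪ M) {b ∈ Icc 2 (n / a) | a * b ∈ M}
  have h₃ := card_union_le {b ∈ A | a * b ∈ A} M
  rw [Nat.card_Icc] at h₁
  omega

theorem sum_card_filter_mul_mem_le_card_mul_triples {S A : Finset ℕ} (hS : S ⊆ A) :
    ∑ a ∈ S, #{b ∈ A | a * b ∈ A} ≤ #{t ∈ A ×ˢ A ×ˢ A | t.1 * t.2.1 = t.2.2} := by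
  rw [← card_sigma]
  refine card_le_card_of_injOn (fun p => (p.1, p.2, p.1 * p.2)) ?_ ?_
  · intro p hp
    simp only [coe_sigma, Set.mem_sigma_iff, mem_coe, mem_filter] at hp
    simp only [coe_filter, Set.mem_ofPred_eq, mem_product, and_true]
    exact ⟨hS hp.1, hp.2.1, hp.2.2⟩
  · intro p _ q _ h
    simp only [Prod.mk.injEq] at h
    exact Sigma.ext h.1 (heq_of_eq h.2.1)

theorem log_lower_bound_le_card_mul_triples {n s m : ℕ} {A : Finset ℕ} (hsn : s ≤ n)
    (hm : #(Icc 2 n \ A) = m) (hms : m + 1 ≤ s) (hc : 2 + 2 * (m : ℝ) ≤ n / s) :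
    n * (log (s + 1) - log (m + 2)) - (s - 1 - m) * (2 + 2 * m) ≤
      (#{t ∈ A ×ˢ A ×ˢ A | t.1 * t.2.1 = t.2.2} : ℝ) := by
  set S := Icc 2 s ∩ A
  set f : ℕ → ℝ := fun i => n / i - (2 + 2 * m)
  have hS : S ⊆ Ico 2 (s + 1) := fun a ha => by
    simpa [Ico_add_one_right_eq_Icc] using (mem_inter.1 ha).1
  have hcard : s + 1 - #S ≤ m + 2 ∧ #S ≤ s := by
    have h₁ : #(Icc 2 s \ A) + #S = #(Icc 2 s) := card_sdiff_add_card_inter _ _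
    have h₂ : #(Icc 2 s \ A) ≤ m :=
      hm ▸ card_le_card (sdiff_subset_sdiff (Icc_subset_Icc_right hsn) le_rfl)
    have h₃ := card_le_card hS
    rw [Nat.card_Icc] at h₁
    rw [Nat.card_Ico] at h₃
    omega
  have hf : AntitoneOn f (Set.Ico 2 (s + 1)) := fun i hi j _ hij => by
    have : (0 : ℝ) < i := by simp only [Set.mem_Ico] at hi; exact_mod_cast (by omega : 0 < i)
    simp only [f]
    gcongr
  have hf₀ : ∀ i ∈ Ico 1 (s + 1), 0 ≤ f i := fun i hi => by
    rw [mem_Ico] at hi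
    have : (n : ℝ) / s ≤ n / i := by
      gcongr
      · exact_mod_cast hi.1
      · exact_mod_cast Nat.lt_succ_iff.1 hi.2
    simp only [f]
    linarith
  have hg : ∀ a ∈ S, f a ≤ #{b ∈ A | a * b ∈ A} := fun a ha => by
    have ha₀ : 0 < a := by have := (mem_Icc.1 (mem_inter.1 ha).1).1; omega
    have h₁ : ((n / a : ℕ) : ℝ) ≤ #{b ∈ A | a * b ∈ A} + 2 * m + 1 := by
      exact_mod_cast hm ▸ div_le_card_filter_mul_mem_add ha₀
    have h₂ : (n : ℝ) / a - 1 < (n / a : ℕ) := by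
      simpa only [Nat.floor_div_eq_div] using Nat.sub_one_lt_floor ((n : ℝ) / a)
    simp only [f]
    linarith
  calc _ ≤ ∑ i ∈ Ico (m + 2) (s + 1), f i := by
        have := log_sub_log_le_sum_Ico_inv (by omega : 1 ≤ m + 2) (by omega : m + 2 ≤ s + 1)
        simp only [f, sum_sub_distrib, div_eq_mul_inv, ← mul_sum, sum_const, Nat.card_Ico,
          nsmul_eq_mul]
        push_cast at this
        rw [show s + 1 - (m + 2) = s - (m + 1) by omega, Nat.cast_sub hms]
        push_cast
        linear_combination (n : ℝ) * this
    _ ≤ ∑ i ∈ Ico (s + 1 - #S) (s + 1), f i :=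
        sum_le_sum_of_subset_of_nonneg (Ico_subset_Ico_left hcard.1)
          fun i hi _ => hf₀ i (Ico_subset_Ico_left (by have := hcard.2; omega) hi)
    _ ≤ ∑ a ∈ S, f a := sum_Ico_sub_card_le_sum_of_antitoneOn hf hS
    _ ≤ ∑ a ∈ S, (#{b ∈ A | a * b ∈ A} : ℝ) := sum_le_sum hg
    _ ≤ _ := by exact_mod_cast sum_card_filter_mul_mem_le_card_mul_triples inter_subset_right

theorem sq_div_eight_le_log_bound {r s m : ℝ} (hr : 32 ≤ r) (hs : s ≤ r) (hrs : r < s + 1)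
    (hm₀ : 0 ≤ m) (hm : m ≤ r / 2 - 1) :
    r ^ 2 / 8 ≤ r ^ 2 * (log (s + 1) - log (m + 2)) - (s - 1 - m) * (2 + 2 * m) := by
  have hlog : log 2 - 2 / r ≤ log (s + 1) - log (m + 2) := by
    have h₁ : log r ≤ log (s + 1) := log_le_log (by linarith) hrs.le
    have h₂ : log (m + 2) ≤ log (r + 2) - log 2 := by
      rw [← log_div (by linarith) two_ne_zero]
      exact log_le_log (by linarith) (by linarith)
    have h₃ : log (r + 2) - log r ≤ 2 / r := by
      rw [← log_div (by linarith) (by linarith)]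
      calc log ((r + 2) / r) ≤ (r + 2) / r - 1 := log_le_sub_one_of_pos (by positivity)
        _ = 2 / r := by field_simp; ring
    linarith
  have hloss : (s - 1 - m) * (2 + 2 * m) ≤ r ^ 2 / 2 := by
    nlinarith [sq_nonneg (s - 2 - 2 * m)]
  have hr₂ : r ^ 2 * (2 / r) = 2 * r := by field_simp
  have := log_two_gt_d9
  nlinarith [mul_le_mul_of_nonneg_left hlog (sq_nonneg r)]

/-- For sufficiently large `n`, every `A ⊆ {2,...,n}` with `|A| ≥ n - √n/2` contains at
least `n/8` triples `(a,b,c) ∈ A³` with `a*b = c`. -/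
theorem stmt5 :
    ∃ N : ℕ, ∀ n : ℕ, N ≤ n → ∀ A : Finset ℕ, A ⊆ Finset.Icc 2 n →
      (n : ℝ) - Real.sqrt n / 2 ≤ A.card →
      (n : ℝ) / 8 ≤ ((A ×ˢ A ×ˢ A).filter
        (fun t : ℕ × ℕ × ℕ => t.1 * t.2.1 = t.2.2)).card := by
  refine ⟨1024, fun n hn A hA hcard => ?_⟩
  set r := √(n : ℝ)
  set s := Nat.sqrt n
  set m := #(Icc 2 n \ A) with hm
  have hr₂ : r ^ 2 = n := sq_sqrt (Nat.cast_nonneg n)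
  have hr : 32 ≤ r := le_sqrt_of_sq_le (by norm_num; exact_mod_cast hn)
  have hsr : (s : ℝ) ≤ r := le_sqrt_of_sq_le (by exact_mod_cast Nat.sqrt_le' n)
  have hrs : r < s + 1 := (sqrt_lt' (by positivity)).2 (by exact_mod_cast Nat.lt_succ_sqrt' n)
  have hmr : (m : ℝ) ≤ r / 2 - 1 := by
    have hA' := card_le_card hA
    rw [Nat.card_Icc] at hA'
    have hmA : m + #A + 1 = n := by
      rw [hm, card_sdiff_of_subset hA, Nat.card_Icc]
      omega
    have hmA' : (m : ℝ) + #A + 1 = n := by exact_mod_cast hmA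
    linarith
  have hms : m + 1 ≤ s := by exact_mod_cast (by linarith : (m : ℝ) + 1 ≤ s)
  have hc : 2 + 2 * (m : ℝ) ≤ n / s := by
    rw [le_div_iff₀ (by linarith), ← hr₂]
    nlinarith
  calc (n : ℝ) / 8 = r ^ 2 / 8 := by rw [hr₂]
    _ ≤ _ := sq_div_eight_le_log_bound hr hsr hrs m.cast_nonneg hmr
    _ ≤ _ := hr₂ ▸ log_lower_bound_le_card_mul_triples (Nat.sqrt_le_self n) hm.symm hms hc
end

section
/- For every ε > 0 there exists n₀ such that for all n ≥ n₀, every 2-coloring of {2,...,n} contains at least n^{1/3 - ε} monochromatic product Schur triples. -/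
/-!
Let `m = ⌊n^{1/5}⌋`. By Chebyshev's bound there are `≫ m / log m` primes up to `m`, and by
pigeonhole at least a quarter of them, a set `Q`, share the colour pattern `(χ p, χ p²)`.
For two primes `p ≠ q` in `Q`, a short case analysis on the colours of `pq, p²q², p³q, p²q, p²q³`
produces a monochromatic triple `a * b = p^i q^j` with `i, j ≥ 1`, `i + j ≤ 5`, so `a * b ≤ n`.
Its product has prime support `{p, q}`, so different pairs give different triples, and there are
at least `(#Q choose 2) ≫ n^{2/5} / log² n ≥ n^{1/3}` of them.
-/

open Filter Asymptotics Real Finset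

/-- `((i₁, j₁), (i₂, j₂))` stands for the candidate product `p^i₁ q^j₁ * p^i₂ q^j₂`. -/
def candidateExponents : List ((ℕ × ℕ) × (ℕ × ℕ)) :=
  [((1, 0), (0, 1)), ((2, 0), (0, 2)), ((1, 1), (1, 1)), ((2, 0), (1, 1)),
    ((1, 0), (2, 1)), ((2, 1), (0, 2)), ((0, 1), (2, 2))]

theorem ne_zero_and_add_le_five_of_mem_candidateExponents :
    ∀ e ∈ candidateExponents, e.1 ≠ 0 ∧ e.2 ≠ 0 ∧ (e.1 + e.2).1 ≠ 0 ∧ (e.1 + e.2).2 ≠ 0 ∧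
      (e.1 + e.2).1 + (e.1 + e.2).2 ≤ 5 := by
  decide

theorem exists_mem_candidateExponents_monochromatic (f : ℕ × ℕ → Fin 2)
    (h₁ : f (1, 0) = f (0, 1)) (h₂ : f (2, 0) = f (0, 2)) :
    ∃ e ∈ candidateExponents, f e.1 = f e.2 ∧ f e.2 = f (e.1 + e.2) := by
  have third : ∀ {a b c : Fin 2}, a ≠ c → b ≠ c → a = b := by decide
  by_cases h₁₁ : f (1, 1) = f (1, 0)
  · exact ⟨((1, 0), (0, 1)), by decide, h₁, h₁.symm.trans h₁₁.symm⟩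
  by_cases h₂₂ : f (2, 2) = f (2, 0)
  · exact ⟨((2, 0), (0, 2)), by decide, h₂, h₂.symm.trans h₂₂.symm⟩
  by_cases h₂₀ : f (2, 0) = f (1, 0)
  · exact ⟨((1, 1), (1, 1)), by decide, rfl, third h₁₁ (h₂₀ ▸ h₂₂)⟩
  have h₁₁' : f (1, 1) = f (2, 0) := third h₁₁ h₂₀
  have h₂₂' : f (2, 2) = f (1, 0) := third h₂₂ (Ne.symm h₂₀)
  by_cases h₃₁ : f (3, 1) = f (2, 0)
  · exact ⟨((2, 0), (1, 1)), by decide, h₁₁'.symm, h₁₁'.trans h₃₁.symm⟩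
  have h₃₁' : f (3, 1) = f (1, 0) := third h₃₁ (Ne.symm h₂₀)
  by_cases h₂₁ : f (2, 1) = f (1, 0)
  · exact ⟨((1, 0), (2, 1)), by decide, h₂₁.symm, h₂₁.trans h₃₁'.symm⟩
  have h₂₁' : f (2, 1) = f (2, 0) := third h₂₁ h₂₀
  by_cases h₂₃ : f (2, 3) = f (2, 0)
  · exact ⟨((2, 1), (0, 2)), by decide, h₂₁'.trans h₂, h₂.symm.trans h₂₃.symm⟩
  · exact ⟨((0, 1), (2, 2)), by decide, h₁.symm.trans h₂₂'.symm,
      h₂₂'.trans (third h₂₃ (Ne.symm h₂₀)).symm⟩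

theorem Nat.primeFactors_pow_mul_pow {p q i j : ℕ} (hp : p.Prime) (hq : q.Prime) (hi : i ≠ 0)
    (hj : j ≠ 0) : (p ^ i * q ^ j).primeFactors = {p, q} := by
  rw [Nat.primeFactors_mul (pow_ne_zero _ hp.ne_zero) (pow_ne_zero _ hq.ne_zero),
    Nat.primeFactors_pow _ hi, Nat.primeFactors_pow _ hj, hp.primeFactors, hq.primeFactors]
  rfl

theorem Nat.two_le_pow_mul_pow {p q : ℕ} (hp : 2 ≤ p) (hq : 2 ≤ q) {e : ℕ × ℕ} (he : e ≠ 0) :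
    2 ≤ p ^ e.1 * q ^ e.2 := by
  obtain ⟨i, j⟩ := e
  rcases Nat.eq_zero_or_pos i with rfl | hi
  · have hj : j ≠ 0 := by simpa using he
    simpa using hq.trans (Nat.le_self_pow hj q)
  · calc 2 ≤ p ^ i := hp.trans (Nat.le_self_pow hi.ne' p)
      _ ≤ p ^ i * q ^ j := Nat.le_mul_of_pos_right _ (by positivity)

theorem Nat.pow_mul_pow_le_pow_add {p q m : ℕ} (hp : p ≤ m) (hq : q ≤ m) (i j : ℕ) :
    p ^ i * q ^ j ≤ m ^ (i + j) :=
  pow_add m i j ▸ Nat.mul_le_mul (Nat.pow_le_pow_left hp i) (Nat.pow_le_pow_left hq j)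

def monoProductTriples (n : ℕ) (χ : ℕ → Fin 2) : Finset (ℕ × ℕ) :=
  ((Finset.Icc 2 n) ×ˢ (Finset.Icc 2 n)).filter
    (fun q : ℕ × ℕ => q.1 ≤ q.2 ∧ q.1 * q.2 ≤ n ∧ χ q.1 = χ q.2 ∧ χ q.2 = χ (q.1 * q.2))

theorem min_max_mem_monoProductTriples {n a b : ℕ} {χ : ℕ → Fin 2} (ha : 2 ≤ a) (hb : 2 ≤ b)
    (hab : a * b ≤ n) (h₁ : χ a = χ b) (h₂ : χ b = χ (a * b)) :
    (min a b, max a b) ∈ monoProductTriples n χ := by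
  have hle : ∀ {x y}, 2 ≤ y → x * y ≤ n → x ≤ n := fun hy h =>
    (Nat.le_mul_of_pos_right _ (by omega)).trans h
  simp only [monoProductTriples, mem_filter, mem_product, mem_Icc]
  rcases le_total a b with h | h
  · simp only [min_eq_left h, max_eq_right h]
    exact ⟨⟨⟨ha, hle hb hab⟩, hb, hle ha (mul_comm a b ▸ hab)⟩, h, hab, h₁, h₂⟩
  · simp only [min_eq_right h, max_eq_left h, mul_comm b a]
    exact ⟨⟨⟨hb, hle ha (mul_comm a b ▸ hab)⟩, ha, hle hb hab⟩, h, hab, h₁.symm, h₁ ▸ h₂⟩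

theorem exists_mem_monoProductTriples_primeFactors_eq {n m p q : ℕ} {χ : ℕ → Fin 2}
    (hp : p.Prime) (hq : q.Prime) (hpm : p ≤ m) (hqm : q ≤ m) (hmn : m ^ 5 ≤ n)
    (h₁ : χ p = χ q) (h₂ : χ (p ^ 2) = χ (q ^ 2)) :
    ∃ t ∈ monoProductTriples n χ, (t.1 * t.2).primeFactors = {p, q} := by
  set f : ℕ × ℕ → Fin 2 := fun e => χ (p ^ e.1 * q ^ e.2)
  have hf : ∀ e₁ e₂ : ℕ × ℕ,
      p ^ e₁.1 * q ^ e₁.2 * (p ^ e₂.1 * q ^ e₂.2) = p ^ (e₁ + e₂).1 * q ^ (e₁ + e₂).2 := by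
    intro e₁ e₂; simp only [Prod.fst_add, Prod.snd_add, pow_add]; ring
  obtain ⟨e, he, hmono₁, hmono₂⟩ :=
    exists_mem_candidateExponents_monochromatic f (by simpa [f] using h₁) (by simpa [f] using h₂)
  obtain ⟨he₁, he₂, hi, hj, hsum⟩ := ne_zero_and_add_le_five_of_mem_candidateExponents e he
  refine ⟨_, min_max_mem_monoProductTriples (Nat.two_le_pow_mul_pow hp.two_le hq.two_le he₁)
    (Nat.two_le_pow_mul_pow hp.two_le hq.two_le he₂) ?_ hmono₁ (hf _ _ ▸ hmono₂), ?_⟩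
  · rw [hf]
    calc _ ≤ m ^ ((e.1 + e.2).1 + (e.1 + e.2).2) := Nat.pow_mul_pow_le_pow_add hpm hqm _ _
      _ ≤ m ^ 5 := Nat.pow_le_pow_right (by have := hp.two_le; omega) hsum
      _ ≤ n := hmn
  · rw [min_mul_max, hf, Nat.primeFactors_pow_mul_pow hp hq hi hj]

theorem choose_two_le_card_monoProductTriples {n m : ℕ} {χ : ℕ → Fin 2} {Q : Finset ℕ}
    (hQ : ∀ p ∈ Q, p.Prime ∧ p ≤ m) (hmn : m ^ 5 ≤ n)
    (hχ : ∀ p ∈ Q, ∀ q ∈ Q, χ p = χ q ∧ χ (p ^ 2) = χ (q ^ 2)) :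
    Q.card.choose 2 ≤ (monoProductTriples n χ).card := by
  have hcover : Q.powersetCard 2 ⊆
      (monoProductTriples n χ).image (fun t => (t.1 * t.2).primeFactors) := by
    intro s hs
    obtain ⟨hsQ, hs2⟩ := mem_powersetCard.mp hs
    obtain ⟨p, q, -, rfl⟩ := card_eq_two.mp hs2
    have hpQ : p ∈ Q := hsQ (by simp)
    have hqQ : q ∈ Q := hsQ (by simp)
    obtain ⟨t, ht, hpf⟩ := exists_mem_monoProductTriples_primeFactors_eq (hQ p hpQ).1 (hQ q hqQ).1
      (hQ p hpQ).2 (hQ q hqQ).2 hmn (hχ p hpQ q hqQ).1 (hχ p hpQ q hqQ).2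
    exact mem_image.mpr ⟨t, ht, hpf⟩
  calc Q.card.choose 2 = (Q.powersetCard 2).card := (card_powersetCard 2 Q).symm
    _ ≤ _ := card_le_card hcover
    _ ≤ _ := card_image_le

theorem choose_two_le_card_monoProductTriples_of_four_mul_le {n m k : ℕ} (χ : ℕ → Fin 2)
    (hmn : m ^ 5 ≤ n) (hk : 4 * k ≤ Nat.primeCounting m) :
    k.choose 2 ≤ (monoProductTriples n χ).card := by
  obtain ⟨c, -, hc⟩ := exists_le_card_fiber_of_mul_le_card_of_maps_to
    (s := Nat.primesLE m) (f := fun p => (χ p, χ (p ^ 2))) (t := univ) (fun _ _ => mem_univ _)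
    univ_nonempty
    (by simpa [Nat.primesLE_card_eq_primeCounting] using hk)
  refine (Nat.choose_le_choose 2 hc).trans (choose_two_le_card_monoProductTriples ?_ hmn ?_)
  · intro p hp
    have := (mem_filter.mp hp).1
    exact ⟨Nat.prime_of_mem_primesLE this, Nat.le_of_mem_primesLE this⟩
  · intro p hp q hq
    have := (mem_filter.mp hp).2.trans (mem_filter.mp hq).2.symm
    exact Prod.ext_iff.mp this

theorem mul_log_two_le_primeCounting_add_three_mul_log {x : ℝ} (hx : 2 ≤ x) :
    x * log 2 ≤ (Nat.primeCounting ⌊x⌋₊ + 3) * log x := by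
  have hψ := (Chebyshev.psi_ge' (by linarith)).trans (Chebyshev.psi_le_primeCounting_mul_log' x)
  have hlog : log 2 + log (x + 2) ≤ 3 * log x := by
    rw [← log_mul two_ne_zero (by linarith), ← Nat.cast_ofNat (n := 3), ← log_pow]
    exact log_le_log (by linarith)
      (by nlinarith [mul_nonneg (sub_nonneg.2 hx) (sq_nonneg (x + 1))])
  linarith

theorem isLittleO_mul_rpow_add_const_mul_log (c d : ℝ) {a : ℝ} (ha : a < 1) :
    (fun x => (c * x ^ a + d) * log x) =o[atTop] id := by
  have hrpow : (fun x => x ^ a * log x) =o[atTop] id := by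
    refine ((isBigO_refl (fun x : ℝ => x ^ a) atTop).mul_isLittleO
      (isLittleO_log_rpow_atTop (sub_pos.mpr ha))).congr' EventuallyEq.rfl ?_
    filter_upwards [eventually_gt_atTop 0] with x hx
    rw [← rpow_add hx, add_sub_cancel, rpow_one, id]
  refine ((hrpow.const_mul_left c).add (isLittleO_log_id_atTop.const_mul_left d)).congr_left ?_
  intro x; ring

theorem eventually_mul_rpow_le_primeCounting (c : ℝ) {a : ℝ} (ha : a < 1) :
    ∀ᶠ x : ℝ in atTop, c * x ^ a ≤ Nat.primeCounting ⌊x⌋₊ := by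
  filter_upwards [(isLittleO_mul_rpow_add_const_mul_log c 3 ha).def
    (half_pos (log_pos one_lt_two)), eventually_ge_atTop 2] with x hsmall hx
  rw [id, norm_of_nonneg (r := x) (by linarith)] at hsmall
  have hlt : (c * x ^ a + 3) * log x < (Nat.primeCounting ⌊x⌋₊ + 3) * log x := by
    calc _ ≤ log 2 / 2 * x := (le_norm_self _).trans hsmall
      _ < x * log 2 := by nlinarith [log_pos one_lt_two]
      _ ≤ _ := mul_log_two_le_primeCounting_add_three_mul_log hx
  linarith [lt_of_mul_lt_mul_right hlt (log_nonneg (by linarith))]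

theorem Nat.floor_rpow_inv_pow_le (n : ℕ) {k : ℕ} (hk : k ≠ 0) :
    ⌊(n : ℝ) ^ (k⁻¹ : ℝ)⌋₊ ^ k ≤ n := by
  have h := pow_le_pow_left₀ (Nat.cast_nonneg (α := ℝ) _)
    (Nat.floor_le (rpow_nonneg (Nat.cast_nonneg n) (k⁻¹ : ℝ))) k
  rw [← rpow_natCast ((n : ℝ) ^ (k⁻¹ : ℝ)), ← rpow_mul (Nat.cast_nonneg _),
    inv_mul_cancel₀ (Nat.cast_ne_zero.mpr hk), rpow_one] at h
  exact_mod_cast h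

theorem eventually_four_mul_le_primeCounting :
    ∀ᶠ n : ℕ in atTop, 4 * (2 * ⌈(n : ℝ) ^ (6⁻¹ : ℝ)⌉₊ + 1) ≤
      Nat.primeCounting ⌊(n : ℝ) ^ (5⁻¹ : ℝ)⌋₊ := by
  have hroot : Tendsto (fun n : ℕ => (n : ℝ) ^ (5⁻¹ : ℝ)) atTop atTop :=
    (tendsto_rpow_atTop (by norm_num)).comp tendsto_natCast_atTop_atTop
  filter_upwards [hroot.eventually ((eventually_mul_rpow_le_primeCounting 20
    (show (5 / 6 : ℝ) < 1 by norm_num)).and (eventually_ge_atTop 1))] with n ⟨hπ, h1⟩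
  have hy : ((n : ℝ) ^ (5⁻¹ : ℝ)) ^ (5 / 6 : ℝ) = (n : ℝ) ^ (6⁻¹ : ℝ) := by
    rw [← rpow_mul (Nat.cast_nonneg n)]; norm_num
  have hy1 : 1 ≤ (n : ℝ) ^ (6⁻¹ : ℝ) := hy ▸ one_le_rpow h1 (by norm_num)
  have hceil := Nat.ceil_lt_add_one (zero_le_one.trans hy1)
  rw [hy] at hπ
  exact_mod_cast (show (4 * (2 * ⌈(n : ℝ) ^ (6⁻¹ : ℝ)⌉₊ + 1) : ℝ) ≤
    Nat.primeCounting ⌊(n : ℝ) ^ (5⁻¹ : ℝ)⌋₊ by linarith)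

theorem Nat.mul_self_le_choose_two (T : ℕ) : T * T ≤ (2 * T + 1).choose 2 := by
  rw [Nat.choose_two_right, show (2 * T + 1) * (2 * T + 1 - 1) = 2 * ((2 * T + 1) * T) by
    rw [Nat.add_sub_cancel]; ring, Nat.mul_div_cancel_left _ two_pos]
  exact Nat.mul_le_mul_right T (by omega)

/-- For every `ε > 0` and sufficiently large `n`, every 2-colouring of `{2,...,n}`
contains at least `n^(1/3-ε)` monochromatic product Schur triples (counted as unordered
solutions, i.e. pairs `a ≤ b` with `a*b ≤ n`). -/
theorem stmt6 (ε : ℝ) (hε : 0 < ε) :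
    ∃ n₀ : ℕ, ∀ n : ℕ, n₀ ≤ n → ∀ χ : ℕ → Fin 2,
      (n : ℝ) ^ ((1 : ℝ) / 3 - ε) ≤
        ((((Finset.Icc 2 n) ×ˢ (Finset.Icc 2 n)).filter
          (fun q : ℕ × ℕ => q.1 ≤ q.2 ∧ q.1 * q.2 ≤ n ∧
            χ q.1 = χ q.2 ∧ χ q.2 = χ (q.1 * q.2))).card : ℝ) := by
  obtain ⟨n₀, hn₀⟩ := eventually_atTop.mp eventually_four_mul_le_primeCounting
  refine ⟨max n₀ 1, fun n hn χ => ?_⟩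
  have hn1 : (1 : ℝ) ≤ n := by exact_mod_cast (le_max_right n₀ 1).trans hn
  set T := ⌈(n : ℝ) ^ (6⁻¹ : ℝ)⌉₊
  have hT : (n : ℝ) ^ (6⁻¹ : ℝ) ≤ T := Nat.le_ceil _
  have hcount : (2 * T + 1).choose 2 ≤ (monoProductTriples n χ).card :=
    choose_two_le_card_monoProductTriples_of_four_mul_le χ
      (by exact_mod_cast Nat.floor_rpow_inv_pow_le n (k := 5) (by norm_num))
      (hn₀ n ((le_max_left n₀ 1).trans hn))
  have hchoose := (Nat.mul_self_le_choose_two T).trans hcount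
  calc (n : ℝ) ^ ((1 : ℝ) / 3 - ε) ≤ (n : ℝ) ^ ((1 : ℝ) / 3) :=
        rpow_le_rpow_of_exponent_le hn1 (by linarith)
    _ = (n : ℝ) ^ (6⁻¹ : ℝ) * (n : ℝ) ^ (6⁻¹ : ℝ) := by
        rw [← rpow_add (by linarith)]; norm_num
    _ ≤ (T * T : ℕ) := by push_cast; exact mul_le_mul hT hT (by positivity) (by positivity)
    _ ≤ (monoProductTriples n χ).card := by exact_mod_cast hchoose
end

section
/- Let k, n be positive integers and let S'(k) be the least m such that every k-coloring of {1,...,m} has a monochromatic solution of a+b=c or a+b=c-1. Then there exists a subset A of {2,...,n} with |A| ≥ n - n^{1/S'(k)} and a k-coloring of A with no monochromatic product Schur triple; i.e., g_*(k,n) ≥ n - n^{1/S'(k)}. -/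
/-!
Write `S = S'(k)` and fix a `k`-colouring `χ` of `{1, …, S - 1}` with no monochromatic solution
of `x + y = z` or `x + y + 1 = z`. For `n^{1/S} < a ≤ n` the level
`L a = clog n (a ^ S) - 1 = ⌈S log_n a⌉ - 1` lies in `{1, …, S - 1}`, and since ceilings of
logarithms are subadditive up to one,
`L (a * b) ∈ {L a + L b, L a + L b + 1}`. Hence `χ ∘ L` has no monochromatic product `a * b = c`.
If the set defining `S'(k)` is empty, `sInf ∅ = 0` gives `S'(k) = 0`, the bound reads `n - 1`, and
the same argument with `L = ⌊log₂⌋` colours all of `{2, …, n}`.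
-/

/-- The double-sum Schur number `S'(k)`: the least `m > 0` such that every `k`-colouring of
`{1,...,m}` has a monochromatic solution of `a+b=c` or `a+b=c-1`. -/
noncomputable def doubleSumSchur (k : ℕ) : ℕ :=
  sInf {m : ℕ | 0 < m ∧ ∀ χ : ℕ → Fin k,
    ∃ a ∈ Finset.Icc 1 m, ∃ b ∈ Finset.Icc 1 m, ∃ c ∈ Finset.Icc 1 m,
      (a + b = c ∨ a + b + 1 = c) ∧ χ a = χ b ∧ χ b = χ c}

open Finset

def IsDoubleSumFree {α : Type*} (χ : ℕ → α) (m : ℕ) : Prop :=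
  ∀ a ∈ Icc 1 m, ∀ b ∈ Icc 1 m, ∀ c ∈ Icc 1 m,
    (a + b = c ∨ a + b + 1 = c) → ¬(χ a = χ b ∧ χ b = χ c)

def IsProductSchurFree {α : Type*} (χ : ℕ → α) (A : Finset ℕ) : Prop :=
  ∀ a ∈ A, ∀ b ∈ A, ∀ c ∈ A, a * b = c → ¬(χ a = χ b ∧ χ b = χ c)

section DoubleSumSchur

variable {k m : ℕ}

lemma isDoubleSumFree_one {α : Type*} (χ : ℕ → α) : IsDoubleSumFree χ 1 := by
  intro a ha b hb c hc hsum
  simp only [mem_Icc] at ha hb hc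
  omega

lemma doubleSumSchur_eq_sInf :
    doubleSumSchur k = sInf {m | 0 < m ∧ ∀ χ : ℕ → Fin k, ¬IsDoubleSumFree χ m} := by
  simp only [doubleSumSchur, IsDoubleSumFree, not_forall, not_not, exists_prop]

lemma not_isDoubleSumFree_doubleSumSchur (h : doubleSumSchur k ≠ 0) (χ : ℕ → Fin k) :
    ¬IsDoubleSumFree χ (doubleSumSchur k) := by
  rw [doubleSumSchur_eq_sInf] at h ⊢
  exact (Nat.sInf_mem (Nat.nonempty_of_pos_sInf (Nat.pos_of_ne_zero h))).2 χ

lemma one_lt_doubleSumSchur (hk : 0 < k) (h : doubleSumSchur k ≠ 0) : 1 < doubleSumSchur k := by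
  have h1 : doubleSumSchur k ≠ 1 := fun h1 =>
    not_isDoubleSumFree_doubleSumSchur h (fun _ => ⟨0, hk⟩) (h1 ▸ isDoubleSumFree_one _)
  omega

lemma exists_isDoubleSumFree (hm : 0 < m) (h : m < doubleSumSchur k ∨ doubleSumSchur k = 0) :
    ∃ χ : ℕ → Fin k, IsDoubleSumFree χ m := by
  by_contra! hnot
  rw [doubleSumSchur_eq_sInf] at h
  have hmem : m ∈ {m | 0 < m ∧ ∀ χ : ℕ → Fin k, ¬IsDoubleSumFree χ m} := ⟨hm, hnot⟩
  have hle := Nat.sInf_le hmem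
  have hpos := (Nat.sInf_mem ⟨m, hmem⟩).1
  omega

end DoubleSumSchur

lemma IsDoubleSumFree.isProductSchurFree_comp {α : Type*} {χ : ℕ → α} {m : ℕ}
    (hχ : IsDoubleSumFree χ m) {A : Finset ℕ} {L : ℕ → ℕ} (hL : ∀ a ∈ A, L a ∈ Icc 1 m)
    (hmul : ∀ a ∈ A, ∀ b ∈ A, a * b ∈ A → L (a * b) = L a + L b ∨ L (a * b) = L a + L b + 1) :
    IsProductSchurFree (χ ∘ L) A := by
  rintro a ha b hb c hc rfl
  exact hχ _ (hL a ha) _ (hL b hb) _ (hL _ hc) ((hmul a ha b hb hc).imp Eq.symm Eq.symm)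

namespace Nat

variable {b x y : ℕ}

lemma log_add_log_le_log_mul (hb : 1 < b) (hx : x ≠ 0) (hy : y ≠ 0) :
    log b x + log b y ≤ log b (x * y) :=
  le_log_of_pow_le hb <| by
    rw [pow_add]; exact Nat.mul_le_mul (pow_log_le_self b hx) (pow_log_le_self b hy)

lemma log_mul_le_log_add_log_add_one (hb : 1 < b) (hx : x ≠ 0) (hy : y ≠ 0) :
    log b (x * y) ≤ log b x + log b y + 1 := by
  have hlt : x * y < b ^ (log b x + 1 + (log b y + 1)) := by
    rw [pow_add]
    exact Nat.mul_lt_mul_of_lt_of_lt (lt_pow_succ_log_self hb x) (lt_pow_succ_log_self hb y)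
  have := log_lt_of_lt_pow (by positivity) hlt
  omega

lemma clog_mul_le_clog_add_clog (hb : 1 < b) : clog b (x * y) ≤ clog b x + clog b y :=
  clog_le_of_le_pow <| by
    rw [pow_add]; exact Nat.mul_le_mul (le_pow_clog hb x) (le_pow_clog hb y)

lemma clog_add_clog_le_clog_mul_add_one (hb : 1 < b) (hx : 1 < x) (hy : 1 < y) :
    clog b x + clog b y ≤ clog b (x * y) + 1 := by
  have hcx := clog_pos hb hx
  have hcy := clog_pos hb hy
  have hlt : b ^ (clog b x + clog b y - 2) < b ^ clog b (x * y) := by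
    calc b ^ (clog b x + clog b y - 2) = b ^ (clog b x - 1) * b ^ (clog b y - 1) := by
          rw [← pow_add]; congr 1; omega
      _ < x * y := Nat.mul_lt_mul_of_lt_of_lt (pow_pred_clog_lt_self hb hx)
          (pow_pred_clog_lt_self hb hy)
      _ ≤ b ^ clog b (x * y) := le_pow_clog hb _
  have := (Nat.pow_lt_pow_iff_right hb).mp hlt
  omega

end Nat

lemma filter_lt_pow_subset_Icc (n S : ℕ) : {a ∈ Icc 1 n | n < a ^ S} ⊆ Icc 2 n := by
  intro a ha
  simp only [mem_filter, mem_Icc] at ha ⊢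
  obtain ⟨⟨ha1, han⟩, hna⟩ := ha
  refine ⟨?_, han⟩
  rcases ha1.eq_or_lt with rfl | ha1
  · rw [one_pow] at hna; omega
  · exact ha1

lemma sub_rpow_le_card_filter_lt_pow (n S : ℕ) (hS : 0 < S) :
    (n : ℝ) - (n : ℝ) ^ ((1 : ℝ) / S) ≤ #{a ∈ Icc 1 n | n < a ^ S} := by
  have hsub : {a ∈ Icc 1 n | a ^ S ≤ n} ⊆ Icc 1 ⌊(n : ℝ) ^ ((1 : ℝ) / S)⌋₊ := by
    intro a ha
    simp only [mem_filter, mem_Icc] at ha ⊢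
    refine ⟨ha.1.1, Nat.le_floor ?_⟩
    rw [one_div, Real.le_rpow_inv_iff_of_pos (by positivity) (by positivity) (by positivity),
      Real.rpow_natCast]
    exact_mod_cast ha.2
  have hsmall : (#{a ∈ Icc 1 n | a ^ S ≤ n} : ℝ) ≤ (n : ℝ) ^ ((1 : ℝ) / S) :=
    calc (#{a ∈ Icc 1 n | a ^ S ≤ n} : ℝ)
        ≤ #(Icc 1 ⌊(n : ℝ) ^ ((1 : ℝ) / S)⌋₊) := by exact_mod_cast card_le_card hsub
      _ ≤ (n : ℝ) ^ ((1 : ℝ) / S) := by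
        rw [Nat.card_Icc, Nat.add_sub_cancel]; exact Nat.floor_le (by positivity)
  have hsplit := card_filter_add_card_filter_not (s := Icc 1 n) (fun a => n < a ^ S)
  simp only [not_lt, Nat.card_Icc, Nat.add_sub_cancel] at hsplit
  have hsplit' : (n : ℝ) = _ := congrArg (Nat.cast (R := ℝ)) hsplit.symm
  push_cast at hsplit'
  linarith

section Colourings

variable {k : ℕ}

lemma exists_isProductSchurFree_Icc_of_doubleSumSchur_eq_zero (hS : doubleSumSchur k = 0)
    (n : ℕ) : ∃ χ : ℕ → Fin k, IsProductSchurFree χ (Icc 2 n) := by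
  obtain ⟨χ, hχ⟩ := exists_isDoubleSumFree (k := k) (Nat.succ_pos (Nat.log 2 n)) (Or.inr hS)
  refine ⟨χ ∘ Nat.log 2, hχ.isProductSchurFree_comp (fun a ha => ?_) fun a ha b hb _ => ?_⟩
  · simp only [mem_Icc] at ha ⊢
    exact ⟨Nat.le_log_of_pow_le one_lt_two (by omega),
      (Nat.log_mono_right ha.2).trans (Nat.le_succ _)⟩
  · simp only [mem_Icc] at ha hb
    have := Nat.log_add_log_le_log_mul one_lt_two (x := a) (y := b) (by omega) (by omega)
    have := Nat.log_mul_le_log_add_log_add_one one_lt_two (x := a) (y := b) (by omega) (by omega)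
    omega

lemma exists_isProductSchurFree_of_doubleSumSchur_ne_zero (hk : 0 < k)
    (hS : doubleSumSchur k ≠ 0) (n : ℕ) :
    ∃ χ : ℕ → Fin k, IsProductSchurFree χ {a ∈ Icc 1 n | n < a ^ doubleSumSchur k} := by
  set S := doubleSumSchur k
  have hS1 : 1 < S := one_lt_doubleSumSchur hk hS
  obtain ⟨χ, hχ⟩ := exists_isDoubleSumFree (k := k) (m := S - 1) (by omega) (Or.inl (by omega))
  have hlevel : ∀ a ∈ ({a ∈ Icc 1 n | n < a ^ S} : Finset ℕ),
      1 < n ∧ 1 < a ^ S ∧ 1 < Nat.clog n (a ^ S) ∧ Nat.clog n (a ^ S) ≤ S := by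
    intro a ha
    have ha2 := mem_Icc.mp (filter_lt_pow_subset_Icc n S ha)
    simp only [mem_filter, mem_Icc] at ha
    obtain ⟨⟨-, han⟩, hna⟩ := ha
    have hn : 1 < n := by omega
    refine ⟨hn, by omega, (Nat.lt_clog_iff_pow_lt hn).mpr (by simpa using hna),
      Nat.clog_le_of_le_pow (Nat.pow_le_pow_left han S)⟩
  refine ⟨χ ∘ fun a => Nat.clog n (a ^ S) - 1,
    hχ.isProductSchurFree_comp (fun a ha => ?_) fun a ha b hb _ => ?_⟩
  · obtain ⟨-, -, hlow, hup⟩ := hlevel a ha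
    simp only [mem_Icc]
    omega
  · obtain ⟨hn, ha1, ha2, -⟩ := hlevel a ha
    obtain ⟨-, hb1, hb2, -⟩ := hlevel b hb
    have := Nat.clog_mul_le_clog_add_clog hn (x := a ^ S) (y := b ^ S)
    have := Nat.clog_add_clog_le_clog_mul_add_one hn ha1 hb1
    simp only [mul_pow]
    omega

end Colourings

theorem stmt7_general (k n : ℕ) (hk : 0 < k) :
    ∃ A : Finset ℕ, A ⊆ Finset.Icc 2 n ∧
      (n : ℝ) - (n : ℝ) ^ ((1 : ℝ) / doubleSumSchur k) ≤ A.card ∧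
      ∃ χ : ℕ → Fin k, ∀ a ∈ A, ∀ b ∈ A, ∀ c ∈ A,
        a * b = c → ¬(χ a = χ b ∧ χ b = χ c) := by
  obtain hS | hS := eq_or_ne (doubleSumSchur k) 0
  · obtain ⟨χ, hχ⟩ := exists_isProductSchurFree_Icc_of_doubleSumSchur_eq_zero hS n
    refine ⟨Icc 2 n, subset_refl _, ?_, χ, hχ⟩
    have hcard : n ≤ (Icc 2 n).card + 1 := by rw [Nat.card_Icc]; omega
    rw [hS, Nat.cast_zero, div_zero, Real.rpow_zero, sub_le_iff_le_add]
    exact_mod_cast hcard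
  · obtain ⟨χ, hχ⟩ := exists_isProductSchurFree_of_doubleSumSchur_ne_zero hk hS n
    exact ⟨_, filter_lt_pow_subset_Icc n _,
      sub_rpow_le_card_filter_lt_pow n _ (Nat.pos_of_ne_zero hS), χ, hχ⟩

/-- There is a subset `A ⊆ {2,...,n}` of size at least `n - n^(1/S'(k))` admitting a
`k`-colouring with no monochromatic product Schur triple. -/
theorem stmt7 (k n : ℕ) (hk : 0 < k) (hn : 0 < n) :
    ∃ A : Finset ℕ, A ⊆ Finset.Icc 2 n ∧
      (n : ℝ) - (n : ℝ) ^ ((1 : ℝ) / doubleSumSchur k) ≤ A.card ∧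
      ∃ χ : ℕ → Fin k, ∀ a ∈ A, ∀ b ∈ A, ∀ c ∈ A,
        a * b = c → ¬(χ a = χ b ∧ χ b = χ c) :=
  stmt7_general k n hk
end

section
/- Let χ be a k-coloring of {1,...,m-1} with no monochromatic solution of x+y=z and no monochromatic solution of x+y=z-1. Define a coloring of the integers in (n^{1/m}, n] by assigning to a the color χ(⌈m·log_n(a)⌉ - 1). Then this coloring has no monochromatic triple a, b, c with a*b = c. -/
/-!
Write `ℓ(a) = m · log_n a`. For `a ∈ (n^{1/m}, n]` we have `1 < ℓ(a) ≤ m`, so `⌈ℓ(a)⌉ - 1` lies in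
`{1, …, m-1}`, and `ℓ` turns `a * b = c` into `ℓ(a) + ℓ(b) = ℓ(c)`. Since
`⌈x + y⌉ ≤ ⌈x⌉ + ⌈y⌉ ≤ ⌈x + y⌉ + 1`, the shifted ceilings satisfy `x' + y' = z'` or `x' + y' + 1 = z'`,
which `χ` never colours monochromatically.
-/

open Real

noncomputable def logLevel (n m a : ℕ) : ℕ := (⌈(m : ℝ) * logb n a⌉ - 1).toNat

theorem Int.ceil_add_ceil_eq_or {R : Type*} [Ring R] [LinearOrder R] [IsOrderedRing R] [FloorRing R]
    (x y : R) :
    ⌈x⌉ + ⌈y⌉ = ⌈x + y⌉ ∨ ⌈x⌉ + ⌈y⌉ = ⌈x + y⌉ + 1 := by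
  have := Int.ceil_add_le x y
  have := Int.ceil_add_ceil_le x y
  omega

section logLevel

variable {n m a b : ℕ}

theorem one_lt_mul_logb (hm : 0 < m) (hn : 1 < n) (ha : (n : ℝ) ^ ((1 : ℝ) / m) < a) :
    1 < (m : ℝ) * logb n a := by
  have hm' : (0 : ℝ) < m := by exact_mod_cast hm
  have ha0 : (0 : ℝ) < a := (rpow_pos_of_pos (by positivity) _).trans ha
  have := (lt_logb_iff_rpow_lt (by exact_mod_cast hn) ha0).mpr ha
  rwa [div_lt_iff₀' hm'] at this

theorem mul_logb_le (hn : 1 < n) (ha : 0 < a) (han : a ≤ n) : (m : ℝ) * logb n a ≤ m := by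
  have : logb n a ≤ 1 := by
    rw [logb_le_iff_le_rpow (by exact_mod_cast hn) (by exact_mod_cast ha), rpow_one]
    exact_mod_cast han
  exact mul_le_of_le_one_right (Nat.cast_nonneg m) this

theorem logLevel_mem_Icc (hm : 0 < m) (hn : 1 < n) (ha : (n : ℝ) ^ ((1 : ℝ) / m) < a)
    (han : a ≤ n) : logLevel n m a ∈ Finset.Icc 1 (m - 1) := by
  have hlo : 1 < ⌈(m : ℝ) * logb n a⌉ := Int.lt_ceil.mpr (by exact_mod_cast one_lt_mul_logb hm hn ha)
  have ha0 : 0 < a := by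
    have := (rpow_pos_of_pos (by positivity : (0 : ℝ) < n) ((1 : ℝ) / m)).trans ha
    exact_mod_cast this
  have hhi : ⌈(m : ℝ) * logb n a⌉ ≤ m := Int.ceil_le.mpr (by exact_mod_cast mul_logb_le hn ha0 han)
  rw [logLevel, Finset.mem_Icc]
  omega

theorem logLevel_mul (hm : 0 < m) (hn : 1 < n) (ha : 1 < a) (hb : 1 < b) :
    logLevel n m a + logLevel n m b = logLevel n m (a * b) ∨
      logLevel n m a + logLevel n m b + 1 = logLevel n m (a * b) := by
  have hpos : ∀ {t : ℕ}, 1 < t → 0 < ⌈(m : ℝ) * logb n t⌉ := fun ht =>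
    Int.ceil_pos.mpr (mul_pos (by exact_mod_cast hm)
      (logb_pos (by exact_mod_cast hn) (by exact_mod_cast ht)))
  have hmul : (m : ℝ) * logb n (a * b : ℕ) = m * logb n a + m * logb n b := by
    rw [Nat.cast_mul, logb_mul (by positivity) (by positivity), mul_add]
  have hceil := Int.ceil_add_ceil_eq_or ((m : ℝ) * logb n a) ((m : ℝ) * logb n b)
  have hapos := hpos ha
  have hbpos := hpos hb
  have habpos := hpos (one_lt_mul ha.le hb)
  rw [hmul] at habpos
  simp only [logLevel, hmul]
  omega

end logLevel

theorem stmt8_general (n m k : ℕ) (hm : 0 < m)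
    (hnm : (2 : ℝ) ≤ (n : ℝ) ^ ((1 : ℝ) / m))
    (χ : ℕ → Fin k)
    (hχ : ∀ x ∈ Finset.Icc 1 (m - 1), ∀ y ∈ Finset.Icc 1 (m - 1), ∀ z ∈ Finset.Icc 1 (m - 1),
      (x + y = z ∨ x + y + 1 = z) → ¬(χ x = χ y ∧ χ y = χ z)) :
    ∀ a b c : ℕ,
      (n : ℝ) ^ ((1 : ℝ) / m) < a → a ≤ n →
      (n : ℝ) ^ ((1 : ℝ) / m) < b → b ≤ n →
      (n : ℝ) ^ ((1 : ℝ) / m) < c → c ≤ n →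
      a * b = c →
      ¬(χ (⌈(m : ℝ) * Real.logb n a⌉ - 1).toNat = χ (⌈(m : ℝ) * Real.logb n b⌉ - 1).toNat ∧
        χ (⌈(m : ℝ) * Real.logb n b⌉ - 1).toNat = χ (⌈(m : ℝ) * Real.logb n c⌉ - 1).toNat) := by
  intro a b c ha han hb hbn hc hcn habc
  have one_lt : ∀ {t : ℕ}, (n : ℝ) ^ ((1 : ℝ) / m) < t → 1 < t := fun ht => by
    exact_mod_cast (one_lt_two.trans_le hnm).trans ht
  have hn : 1 < n := (one_lt ha).trans_le han
  subst habc
  exact hχ _ (logLevel_mem_Icc hm hn ha han) _ (logLevel_mem_Icc hm hn hb hbn)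
    _ (logLevel_mem_Icc hm hn hc hcn) (logLevel_mul hm hn (one_lt ha) (one_lt hb))

/-- If `χ` is a `k`-colouring of `{1,...,m-1}` with no monochromatic solution of
`x+y=z` or `x+y=z-1`, then colouring each `a ∈ (n^{1/m}, n]` with
`χ(⌈m·log_n a⌉ - 1)` yields no monochromatic triple `a*b=c`. -/
theorem stmt8 (n m k : ℕ) (hn : 0 < n) (hm : 0 < m) (hk : 0 < k)
    (hnm : (2 : ℝ) ≤ (n : ℝ) ^ ((1 : ℝ) / m))
    (χ : ℕ → Fin k)
    (hχ : ∀ x ∈ Finset.Icc 1 (m - 1), ∀ y ∈ Finset.Icc 1 (m - 1), ∀ z ∈ Finset.Icc 1 (m - 1),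
      (x + y = z ∨ x + y + 1 = z) → ¬(χ x = χ y ∧ χ y = χ z)) :
    ∀ a b c : ℕ,
      (n : ℝ) ^ ((1 : ℝ) / m) < a → a ≤ n →
      (n : ℝ) ^ ((1 : ℝ) / m) < b → b ≤ n →
      (n : ℝ) ^ ((1 : ℝ) / m) < c → c ≤ n →
      a * b = c →
      ¬(χ (⌈(m : ℝ) * Real.logb n a⌉ - 1).toNat = χ (⌈(m : ℝ) * Real.logb n b⌉ - 1).toNat ∧
        χ (⌈(m : ℝ) * Real.logb n b⌉ - 1).toNat = χ (⌈(m : ℝ) * Real.logb n c⌉ - 1).toNat) :=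
  stmt8_general n m k hm hnm χ hχ
end

section
/- Let ε ∈ (0,1), k ≥ 1, and n > (2/ε)^{S(k)²}, where S(k) is the k-th Schur number. Then every subset A of {2,...,n} with |A| ≥ n - (1-ε)·n^{1/S(k)} has the property that every k-coloring of A contains a monochromatic product Schur triple. -/
/-!
Pick `t = n^{1/S}` with `S = S(k)` and look at the bases `a ∈ (εt/2, t]`. All their powers
`a, a², …, a^S` lie in `{2,…,n}`, and since `t` is huge compared with `(2/ε)^S` the powers of
different bases never collide: `a^i < b^j` whenever `i < j`. So a base with a power missing from
`A` accounts for a distinct element of `{2,…,n} \ A`, and there are fewer of those than bases.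
For a base `a` with all of `a, …, a^S` in `A`, colour the exponent `i` by the colour of `a^i`;
Schur's theorem gives `x + y = z` monochromatic, i.e. `a^x · a^y = a^z`.
-/

/-- The Schur number `S(k)`: the least `m > 0` such that every `k`-colouring of
`{1,...,m}` has a monochromatic solution of `x+y=z`. -/
noncomputable def schurNumber (k : ℕ) : ℕ :=
  sInf {m : ℕ | 0 < m ∧ ∀ χ : ℕ → Fin k,
    ∃ a ∈ Finset.Icc 1 m, ∃ b ∈ Finset.Icc 1 m, ∃ c ∈ Finset.Icc 1 m,
      a + b = c ∧ χ a = χ b ∧ χ b = χ c}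

open Finset

lemma schurNumber_spec {k : ℕ} (hk : 0 < schurNumber k) (χ : ℕ → Fin k) :
    ∃ a ∈ Icc 1 (schurNumber k), ∃ b ∈ Icc 1 (schurNumber k), ∃ c ∈ Icc 1 (schurNumber k),
      a + b = c ∧ χ a = χ b ∧ χ b = χ c := by
  have hne : {m : ℕ | 0 < m ∧ ∀ χ : ℕ → Fin k,
      ∃ a ∈ Icc 1 m, ∃ b ∈ Icc 1 m, ∃ c ∈ Icc 1 m,
        a + b = c ∧ χ a = χ b ∧ χ b = χ c}.Nonempty := by
    by_contra h
    rw [Set.not_nonempty_iff_eq_empty] at h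
    rw [schurNumber, h, Nat.sInf_empty] at hk
    exact hk.false
  exact (Nat.sInf_mem hne).2 χ

lemma exists_mul_eq_of_pow_mem {k : ℕ} (hk : 0 < schurNumber k) {A : Finset ℕ} {a : ℕ}
    (ha : ∀ i ∈ Icc 1 (schurNumber k), a ^ i ∈ A) (χ : ℕ → Fin k) :
    ∃ x ∈ A, ∃ y ∈ A, ∃ z ∈ A, x * y = z ∧ χ x = χ y ∧ χ y = χ z := by
  obtain ⟨i, hi, j, hj, l, hl, hijl, hχ₁, hχ₂⟩ := schurNumber_spec hk (fun i => χ (a ^ i))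
  exact ⟨a ^ i, ha i hi, a ^ j, ha j hj, a ^ l, ha l hl, by rw [← pow_add, hijl], hχ₁, hχ₂⟩

/-- Pigeonhole: a base with a power outside `A` is sent to that power, injectively because
powers of distinct bases with distinct exponents are ordered by the exponent. -/
lemma exists_forall_pow_mem_of_card_lt {A I : Finset ℕ} {n s : ℕ}
    (hI : ∀ a ∈ I, 2 ≤ a ∧ a ^ s ≤ n)
    (hsep : ∀ a ∈ I, ∀ b ∈ I, ∀ i j, i < j → j ≤ s → a ^ i < b ^ j)
    (hcard : #(Icc 2 n \ A) < #I) :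
    ∃ a ∈ I, ∀ i ∈ Icc 1 s, a ^ i ∈ A := by
  by_contra! hbad
  choose! e he hmiss using hbad
  refine hcard.not_ge (card_le_card_of_injOn (fun a => a ^ e a) (fun a ha => ?_) ?_)
  · obtain ⟨he₁, hes⟩ := mem_Icc.1 (he a ha)
    obtain ⟨ha₂, has⟩ := hI a ha
    refine mem_sdiff.2 ⟨mem_Icc.2 ⟨?_, ?_⟩, hmiss a ha⟩
    · exact ha₂.trans (Nat.le_self_pow (by omega) a)
    · exact (Nat.pow_le_pow_right (by omega) hes).trans has
  · intro a ha b hb hab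
    have hea := he a ha
    have heb := he b hb
    simp only [mem_Icc] at hea heb
    rcases lt_trichotomy (e a) (e b) with h | h | h
    · exact absurd hab (hsep a ha b hb _ _ h heb.2).ne
    · simp only [h] at hab
      exact Nat.pow_left_injective (by omega) hab
    · exact absurd hab (hsep b hb a ha _ _ h hea.2).ne'

lemma pow_lt_pow_of_le_of_div_lt {t X x y : ℝ} {i j : ℕ} (hX : 1 ≤ X) (hx : 0 ≤ x)
    (hxt : x ≤ t) (hy : t / X < y) (hy₁ : 1 ≤ y) (hij : i < j) (hXt : X ^ j < t) :
    x ^ i < y ^ j := by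
  have ht : 0 < t := (pow_pos (by linarith) j).trans hXt
  have hXi : X ^ (i + 1) < t := (pow_le_pow_right₀ hX hij).trans_lt hXt
  calc x ^ i ≤ t ^ i := pow_le_pow_left₀ hx hxt i
    _ < (t / X) ^ (i + 1) := by
      rw [div_pow, lt_div_iff₀ (by positivity), pow_succ t i]
      exact mul_lt_mul_of_pos_left hXi (by positivity)
    _ < y ^ (i + 1) := pow_lt_pow_left₀ hy (by positivity) (by omega)
    _ ≤ y ^ j := pow_le_pow_right₀ hy₁ hij

lemma sub_sub_one_lt_card_Ioc_floor {x y : ℝ} (hx : 0 ≤ x) (hxy : x ≤ y) :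
    y - x - 1 < #(Ioc ⌊x⌋₊ ⌊y⌋₊) := by
  rw [Nat.card_Ioc, Nat.cast_sub (Nat.floor_mono hxy)]
  linarith [Nat.sub_one_lt_floor y, Nat.floor_le hx]

/-- The bases are taken from `(t/X, t]`. -/
lemma exists_forall_pow_mem {A : Finset ℕ} {n s : ℕ} {t X : ℝ} (hX : 1 < X) (hs : 0 < s)
    (htn : t ^ s = n) (hXt : X ^ s < t) (hA : (#(Icc 2 n \ A) : ℝ) ≤ t - t / X - 1) :
    ∃ a : ℕ, ∀ i ∈ Icc 1 s, a ^ i ∈ A := by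
  have ht : 0 < t := (pow_pos (by linarith) s).trans hXt
  have htX : 1 < t / X := by
    rw [lt_div_iff₀ (by linarith), one_mul]
    exact (le_self_pow₀ hX.le hs.ne').trans_lt hXt
  have hmem : ∀ a ∈ Ioc ⌊t / X⌋₊ ⌊t⌋₊, t / X < a ∧ (a : ℝ) ≤ t := fun a ha =>
    ⟨(Nat.floor_lt (by positivity)).1 (mem_Ioc.1 ha).1,
      (Nat.le_floor_iff ht.le).1 (mem_Ioc.1 ha).2⟩
  have hcard : #(Icc 2 n \ A) < #(Ioc ⌊t / X⌋₊ ⌊t⌋₊) := by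
    have := sub_sub_one_lt_card_Ioc_floor (by positivity) (div_le_self ht.le hX.le)
    exact_mod_cast hA.trans_lt this
  obtain ⟨a, -, ha⟩ := exists_forall_pow_mem_of_card_lt (I := Ioc ⌊t / X⌋₊ ⌊t⌋₊)
    (fun a ha => by
      obtain ⟨hXa, hat⟩ := hmem a ha
      refine ⟨by exact_mod_cast htX.trans hXa, ?_⟩
      exact_mod_cast htn ▸ pow_le_pow_left₀ a.cast_nonneg hat s)
    (fun a ha b hb i j hij hjs => by
      obtain ⟨-, hat⟩ := hmem a ha
      obtain ⟨hXb, -⟩ := hmem b hb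
      exact_mod_cast pow_lt_pow_of_le_of_div_lt hX.le a.cast_nonneg hat hXb
        (htX.trans hXb).le hij ((pow_le_pow_right₀ hX.le hjs).trans_lt hXt))
    hcard
  exact ⟨a, ha⟩

lemma card_sdiff_add_card_of_subset_Icc {A : Finset ℕ} {n : ℕ} (hA : A ⊆ Icc 2 n)
    (hn : 1 ≤ n) : (#(Icc 2 n \ A) : ℝ) + #A = n - 1 := by
  rw [← Nat.cast_add, card_sdiff_add_card_eq_card hA, Nat.card_Icc]
  rw [show n + 1 - 2 = n - 1 by omega, Nat.cast_sub hn, Nat.cast_one]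

theorem stmt10_general (ε : ℝ) (hε : ε ∈ Set.Ioo (0 : ℝ) 1) (k n : ℕ)
    (hn : (2 / ε) ^ (schurNumber k ^ 2) < (n : ℝ)) :
    ∀ A : Finset ℕ, A ⊆ Finset.Icc 2 n →
      (n : ℝ) - (1 - ε) * (n : ℝ) ^ ((1 : ℝ) / schurNumber k) ≤ A.card →
      ∀ χ : ℕ → Fin k, ∃ a ∈ A, ∃ b ∈ A, ∃ c ∈ A,
        a * b = c ∧ χ a = χ b ∧ χ b = χ c := by
  intro A hA hcard χ
  obtain ⟨hε₀, hε₁⟩ := hε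
  set s := schurNumber k
  have hX : 1 < 2 / ε := by rw [lt_div_iff₀ hε₀]; linarith
  have hn₁ : (1 : ℝ) ≤ n := (one_le_pow₀ hX.le).trans hn.le
  have hsplit := card_sdiff_add_card_of_subset_Icc hA (by exact_mod_cast hn₁)
  obtain hs | hs := Nat.eq_zero_or_pos s
  -- `S(k) = 0` only as the junk value `sInf ∅`; then `n^{1/0} = 1` and `A` is too large.
  · simp only [hs, CharP.cast_eq_zero, div_zero, Real.rpow_zero] at hcard
    linarith [(#(Icc 2 n \ A)).cast_nonneg (α := ℝ)]
  set t := (n : ℝ) ^ ((1 : ℝ) / s) with ht_def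
  have htn : t ^ s = n := by
    rw [ht_def, one_div, Real.rpow_inv_natCast_pow (by linarith) hs.ne']
  have hXt : (2 / ε) ^ s < t :=
    lt_of_pow_lt_pow_left₀ s (by positivity) (by rwa [← pow_mul, ← sq, htn])
  have ht : 0 < t := (pow_pos (by linarith) s).trans hXt
  have hmissing : (#(Icc 2 n \ A) : ℝ) ≤ t - t / (2 / ε) - 1 := by
    rw [div_div_eq_mul_div]
    linarith [mul_pos hε₀ ht]
  obtain ⟨a, ha⟩ := exists_forall_pow_mem hX hs htn hXt hmissing
  exact exists_mul_eq_of_pow_mem hs ha χ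

/-- For `ε ∈ (0,1)`, `k ≥ 1` and `n > (2/ε)^{S(k)²}`, every `A ⊆ {2,...,n}` with
`|A| ≥ n - (1-ε) n^{1/S(k)}` is such that every `k`-colouring of `A` contains a
monochromatic product Schur triple. -/
theorem stmt10 (ε : ℝ) (hε : ε ∈ Set.Ioo (0 : ℝ) 1) (k n : ℕ) (hk : 1 ≤ k)
    (hn : (2 / ε) ^ (schurNumber k ^ 2) < (n : ℝ)) :
    ∀ A : Finset ℕ, A ⊆ Finset.Icc 2 n →
      (n : ℝ) - (1 - ε) * (n : ℝ) ^ ((1 : ℝ) / schurNumber k) ≤ A.card →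
      ∀ χ : ℕ → Fin k, ∃ a ∈ A, ∃ b ∈ A, ∃ c ∈ A,
        a * b = c ∧ χ a = χ b ∧ χ b = χ c :=
  stmt10_general ε hε k n hn
end

section
/- Let n, m ≥ 2 and let A' be a set of integers contained in [ε·n^{1/m}/2, n^{1/m}] with (ε/2)^{m²} > 1/n and ε ∈ (0,1). Then for any two distinct elements a, b of A' and any i, j ∈ {1,...,m}, we have a^i ≠ b^j. -/
/-!
If `a ^ i = b ^ j` with `i < j ≤ m` and `a, b ∈ [c N, N]`, where `c = ε / 2` and `N = n ^ (1 / m)`,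
then `(c N) ^ j ≤ N ^ i`, i.e. `c ^ j N ^ (j - i) ≤ 1`. But `c ^ (m ^ 2) n > 1` says exactly that
`c ^ m N > 1`, hence `c ^ j N > 1` and `N > 1`, a contradiction. For `i = j` the two bases coincide.
-/

lemma pow_lt_pow_of_one_lt_pow_mul {c N x y : ℝ} {i j k : ℕ} (hc₀ : 0 ≤ c) (hc₁ : c ≤ 1)
    (hN : 1 < c ^ k * N) (hx₀ : 0 ≤ x) (hxN : x ≤ N) (hy : c * N ≤ y) (hij : i < j)
    (hjk : j ≤ k) : x ^ i < y ^ j := by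
  have hN₀ : 0 ≤ N := hx₀.trans hxN
  have hcN : 1 < c ^ j * N :=
    hN.trans_le (mul_le_mul_of_nonneg_right (pow_le_pow_of_le_one hc₀ hc₁ hjk) hN₀)
  have hN₁ : 1 < N := hcN.trans_le (mul_le_of_le_one_left hN₀ (pow_le_one₀ hc₀ hc₁))
  calc x ^ i ≤ N ^ i := pow_le_pow_left₀ hx₀ hxN i
    _ ≤ N ^ (j - 1) := pow_le_pow_right₀ hN₁.le (by omega)
    _ < c ^ j * N * N ^ (j - 1) := lt_mul_of_one_lt_left (by positivity) hcN
    _ = (c * N) ^ j := by rw [mul_pow, mul_assoc, ← pow_succ', Nat.sub_add_cancel (by omega)]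
    _ ≤ y ^ j := pow_le_pow_left₀ (by positivity) hy j

lemma one_lt_pow_mul_rpow_inv {c : ℝ} {n m : ℕ} (hn : 0 < n) (hm : m ≠ 0) (hc : 0 ≤ c)
    (h : (1 : ℝ) / n < c ^ (m ^ 2)) : 1 < c ^ m * (n : ℝ) ^ ((m : ℝ)⁻¹) := by
  have hpow : (c ^ m * (n : ℝ) ^ ((m : ℝ)⁻¹)) ^ m = c ^ (m ^ 2) * n := by
    rw [mul_pow, ← pow_mul, ← sq, Real.rpow_inv_natCast_pow n.cast_nonneg hm]
  rw [← one_lt_pow_iff_of_nonneg (by positivity) hm, hpow, ← div_lt_iff₀ (by positivity)]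
  exact h

theorem stmt11_general (n m : ℕ) (hn : 2 ≤ n) (ε : ℝ) (hε : ε ∈ Set.Ioo (0 : ℝ) 1)
    (hεn : (1 : ℝ) / n < (ε / 2) ^ (m ^ 2))
    (A' : Finset ℕ)
    (hA' : ∀ x ∈ A', ε * (n : ℝ) ^ ((1 : ℝ) / m) / 2 ≤ x ∧ (x : ℝ) ≤ (n : ℝ) ^ ((1 : ℝ) / m)) :
    ∀ a ∈ A', ∀ b ∈ A', a ≠ b →
      ∀ i ∈ Finset.Icc 1 m, ∀ j ∈ Finset.Icc 1 m, a ^ i ≠ b ^ j := by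
  have pow_lt_pow : ∀ x ∈ A', ∀ y ∈ A', ∀ i j, i < j → j ≤ m → x ^ i < y ^ j := by
    intro x hx y hy i j hij hjm
    have hcN := one_lt_pow_mul_rpow_inv (by omega) (by omega) (by linarith [hε.1]) hεn
    rw [← one_div] at hcN
    exact_mod_cast pow_lt_pow_of_one_lt_pow_mul (by linarith [hε.1]) (by linarith [hε.2]) hcN
      x.cast_nonneg (hA' x hx).2 (y := y) (by linarith [(hA' y hy).1]) hij hjm
  intro a ha b hb hab i hi j hj
  simp only [Finset.mem_Icc] at hi hj
  rcases lt_trichotomy i j with hij | rfl | hji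
  · exact (pow_lt_pow a ha b hb i j hij hj.2).ne
  · exact fun h => hab (Nat.pow_left_injective (by omega) h)
  · exact (pow_lt_pow b hb a ha j i hji hi.2).ne'

/-- If `A' ⊆ [ε n^{1/m}/2, n^{1/m}]` and `(ε/2)^{m²} > 1/n`, then for distinct
`a, b ∈ A'` and `i, j ∈ {1,...,m}` we have `a^i ≠ b^j`. -/
theorem stmt11 (n m : ℕ) (hn : 2 ≤ n) (hm : 2 ≤ m) (ε : ℝ) (hε : ε ∈ Set.Ioo (0 : ℝ) 1)
    (hεn : (1 : ℝ) / n < (ε / 2) ^ (m ^ 2))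
    (A' : Finset ℕ)
    (hA' : ∀ x ∈ A', ε * (n : ℝ) ^ ((1 : ℝ) / m) / 2 ≤ x ∧ (x : ℝ) ≤ (n : ℝ) ^ ((1 : ℝ) / m)) :
    ∀ a ∈ A', ∀ b ∈ A', a ≠ b →
      ∀ i ∈ Finset.Icc 1 m, ∀ j ∈ Finset.Icc 1 m, a ^ i ≠ b ^ j :=
  stmt11_general n m hn ε hε hεn A' hA'
end

section
/- If p = p(n) satisfies p³ · n · log n → 0 and p² · √n → 0, then the probability that the random set [2,n]_p contains a product Schur triple tends to 0 as n → ∞. -/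
/-!
First moment method. Every product Schur triple in `A ⊆ [2,n]` is a set `{a, b, ab}` with
`2 ≤ a, b` and `ab ≤ n`; it has three elements when `a ≠ b` and two when `a = b`, and a fixed
set `S ⊆ [2,n]` lies in `[2,n]_p` with probability `p ^ #S`. A union bound over the ordered
pairs `(a, b)` therefore bounds the probability by `p³ · ∑_{a=2}^n n/a + p² · √n`, and
`∑_{a=2}^n 1/a ≤ log n`.
-/

open Finset Real

open scoped Classical in
/-- The probability that the random subset of `{2,...,n}` (each element kept independently
with probability `p`) satisfies the predicate `P`. -/
noncomputable def randProb (n : ℕ) (p : ℝ) (P : Finset ℕ → Prop) : ℝ :=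
  ∑ A ∈ (Finset.Icc 2 n).powerset,
    if P A then p ^ A.card * (1 - p) ^ ((Finset.Icc 2 n).card - A.card) else 0

section RandSubsetProb

variable {α : Type*} {s : Finset α} {p : ℝ}

noncomputable def randSubsetProb (s : Finset α) (p : ℝ) (P : Finset α → Prop)
    [DecidablePred P] : ℝ :=
  ∑ A ∈ s.powerset with P A, p ^ #A * (1 - p) ^ (#s - #A)

lemma randProb_eq_randSubsetProb (n : ℕ) (p : ℝ) (P : Finset ℕ → Prop) [DecidablePred P] :
    randProb n p P = randSubsetProb (Icc 2 n) p P := by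
  rw [randProb, randSubsetProb, sum_filter]
  congr!

lemma randSubsetProb_nonneg (hp : p ∈ Set.Icc 0 1) (P : Finset α → Prop) [DecidablePred P] :
    0 ≤ randSubsetProb s p P :=
  sum_nonneg fun _ _ => mul_nonneg (pow_nonneg hp.1 _) (pow_nonneg (sub_nonneg.2 hp.2) _)

variable [DecidableEq α]

lemma randSubsetProb_superset {S : Finset α} (hS : S ⊆ s) :
    randSubsetProb s p (S ⊆ ·) = p ^ #S := by
  have hsupersets : {A ∈ s.powerset | S ⊆ A} = (s \ S).powerset.image (S ∪ ·) := by
    rw [← Icc_eq_image_powerset hS]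
    ext A
    simp [and_comm]
  have hdisj : ∀ B ∈ (s \ S).powerset, Disjoint S B := fun B hB =>
    disjoint_of_subset_right (mem_powerset.1 hB) disjoint_sdiff
  have hinj : Set.InjOn (S ∪ ·) (s \ S).powerset := fun B hB C hC hBC => by
    rw [← union_sdiff_cancel_left (hdisj B hB), ← union_sdiff_cancel_left (hdisj C hC)]
    exact congrArg (· \ S) hBC
  rw [randSubsetProb, hsupersets, sum_image hinj]
  calc ∑ B ∈ (s \ S).powerset, p ^ #(S ∪ B) * (1 - p) ^ (#s - #(S ∪ B))
      = ∑ B ∈ (s \ S).powerset, p ^ #S * (p ^ #B * (1 - p) ^ (#(s \ S) - #B)) := by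
        refine sum_congr rfl fun B hB => ?_
        rw [card_union_of_disjoint (hdisj B hB), card_sdiff_of_subset hS, Nat.sub_add_eq, pow_add]
        ring
    _ = p ^ #S := by rw [← mul_sum, sum_pow_mul_eq_add_pow, add_sub_cancel, one_pow, mul_one]

lemma randSubsetProb_le_sum_of_cover {ι : Type*} {P : Finset α → Prop} [DecidablePred P]
    (hp : p ∈ Set.Icc 0 1) (I : Finset ι) (S : ι → Finset α)
    (hcover : ∀ A ⊆ s, P A → ∃ i ∈ I, S i ⊆ A) :
    randSubsetProb s p P ≤ ∑ i ∈ I, randSubsetProb s p (S i ⊆ ·) := by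
  simp only [randSubsetProb, sum_filter]
  rw [sum_comm]
  refine sum_le_sum fun A hA => ?_
  have hweight : 0 ≤ p ^ #A * (1 - p) ^ (#s - #A) :=
    mul_nonneg (pow_nonneg hp.1 _) (pow_nonneg (sub_nonneg.2 hp.2) _)
  have hterm_nonneg : ∀ i ∈ I, 0 ≤ if S i ⊆ A then p ^ #A * (1 - p) ^ (#s - #A) else 0 :=
    fun i _ => by split_ifs; exacts [hweight, le_rfl]
  split_ifs with hPA
  · obtain ⟨i, hi, hiA⟩ := hcover A (mem_powerset.1 hA) hPA
    calc p ^ #A * (1 - p) ^ (#s - #A) = if S i ⊆ A then p ^ #A * (1 - p) ^ (#s - #A) else 0 :=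
          (if_pos hiA).symm
      _ ≤ _ := single_le_sum hterm_nonneg hi
  · exact sum_nonneg hterm_nonneg

end RandSubsetProb

def productPairs (n : ℕ) : Finset (ℕ × ℕ) :=
  {q ∈ Icc 2 n ×ˢ Icc 2 n | q.1 * q.2 ≤ n}

lemma mem_productPairs {n : ℕ} {q : ℕ × ℕ} :
    q ∈ productPairs n ↔ 2 ≤ q.1 ∧ 2 ≤ q.2 ∧ q.1 * q.2 ≤ n := by
  simp only [productPairs, mem_filter, mem_product, mem_Icc]
  constructor
  · rintro ⟨⟨⟨h1, -⟩, h2, -⟩, hprod⟩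
    exact ⟨h1, h2, hprod⟩
  · rintro ⟨h1, h2, hprod⟩
    exact ⟨⟨⟨h1, by nlinarith⟩, h2, by nlinarith⟩, hprod⟩

lemma card_productPairs_le (n : ℕ) : #(productPairs n) ≤ ∑ a ∈ Icc 2 n, n / a := by
  calc #(productPairs n) ≤ #((Icc 2 n).biUnion fun a => {a} ×ˢ Icc 1 (n / a)) := by
        refine card_le_card fun q hq => ?_
        obtain ⟨ha, hb, hprod⟩ := mem_productPairs.1 hq
        simp only [mem_biUnion, mem_product, mem_singleton, mem_Icc]
        refine ⟨q.1, ⟨ha, by nlinarith⟩, rfl, by omega, ?_⟩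
        rwa [Nat.le_div_iff_mul_le (by omega), mul_comm]
    _ ≤ ∑ a ∈ Icc 2 n, #({a} ×ˢ Icc 1 (n / a)) := card_biUnion_le
    _ = ∑ a ∈ Icc 2 n, n / a := by simp

lemma card_productPairs_diag_le (n : ℕ) :
    #{q ∈ productPairs n | q.1 = q.2} ≤ Nat.sqrt n := by
  calc #{q ∈ productPairs n | q.1 = q.2} ≤ #((Icc 1 (Nat.sqrt n)).image fun a => (a, a)) := by
        refine card_le_card fun q hq => ?_
        obtain ⟨hq, hdiag⟩ := mem_filter.1 hq
        obtain ⟨ha, -, hprod⟩ := mem_productPairs.1 hq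
        simp only [mem_image, mem_Icc]
        refine ⟨q.1, ⟨by omega, Nat.le_sqrt.2 (hdiag ▸ hprod)⟩, Prod.ext rfl hdiag⟩
    _ ≤ #(Icc 1 (Nat.sqrt n)) := card_image_le
    _ = Nat.sqrt n := by simp

lemma sum_Icc_two_inv_le_log (n : ℕ) : ∑ a ∈ Icc 2 n, (a : ℝ)⁻¹ ≤ log n := by
  rcases Nat.eq_zero_or_pos n with rfl | hn
  · simp
  have hharmonic := harmonic_le_one_add_log n
  rw [harmonic_eq_sum_Icc, ← insert_Icc_add_one_left_eq_Icc hn, sum_insert (by simp)] at hharmonic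
  push_cast at hharmonic
  linarith

lemma sum_div_le_mul_log (n : ℕ) : ((∑ a ∈ Icc 2 n, n / a : ℕ) : ℝ) ≤ n * log n := by
  push_cast
  calc ∑ a ∈ Icc 2 n, ((n / a : ℕ) : ℝ) ≤ ∑ a ∈ Icc 2 n, (n : ℝ) * (a : ℝ)⁻¹ :=
        sum_le_sum fun a _ => Nat.cast_div_le
    _ ≤ n * log n := by rw [← mul_sum]; gcongr; exact sum_Icc_two_inv_le_log n

lemma card_schurTriple {a b : ℕ} (ha : 2 ≤ a) (hb : 2 ≤ b) :
    #({a, b, a * b} : Finset ℕ) = if a = b then 2 else 3 := by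
  have hab : a < a * b := lt_mul_of_one_lt_right (by omega) hb
  have hba : b < a * b := lt_mul_of_one_lt_left (by omega) ha
  split_ifs with h
  · subst h; simp [hab.ne]
  · simp [h, hab.ne, hba.ne]

lemma randProb_schurTriple_le (n : ℕ) {p : ℝ} (hp : p ∈ Set.Icc 0 1) :
    randProb n p (fun A => ∃ a ∈ A, ∃ b ∈ A, a * b ∈ A) ≤
      p ^ 3 * n * log n + p ^ 2 * √n := by
  have hcover : ∀ A ⊆ Icc 2 n, (∃ a ∈ A, ∃ b ∈ A, a * b ∈ A) →
      ∃ q ∈ productPairs n, {q.1, q.2, q.1 * q.2} ⊆ A := by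
    rintro A hA ⟨a, ha, b, hb, hab⟩
    refine ⟨(a, b), mem_productPairs.2 ⟨(mem_Icc.1 (hA ha)).1, (mem_Icc.1 (hA hb)).1,
      (mem_Icc.1 (hA hab)).2⟩, ?_⟩
    simp [insert_subset_iff, ha, hb, hab]
  have htriple : ∀ q ∈ productPairs n, {q.1, q.2, q.1 * q.2} ⊆ Icc 2 n := by
    intro q hq
    obtain ⟨h1, h2, hprod⟩ := mem_productPairs.1 hq
    simp only [insert_subset_iff, singleton_subset_iff, mem_Icc]
    refine ⟨⟨h1, ?_⟩, ⟨h2, ?_⟩, ⟨?_, hprod⟩⟩ <;> nlinarith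
  have hoffdiag : (#{q ∈ productPairs n | ¬q.1 = q.2} : ℝ) ≤ n * log n :=
    le_trans (by exact_mod_cast (card_filter_le _ _).trans (card_productPairs_le n))
      (sum_div_le_mul_log n)
  have hdiag : (#{q ∈ productPairs n | q.1 = q.2} : ℝ) ≤ √n :=
    (Nat.cast_le.2 (card_productPairs_diag_le n)).trans Real.nat_sqrt_le_real_sqrt
  have hp2 : 0 ≤ p ^ 2 := pow_nonneg hp.1 2
  have hp3 : 0 ≤ p ^ 3 := pow_nonneg hp.1 3
  rw [randProb_eq_randSubsetProb]
  calc _ ≤ ∑ q ∈ productPairs n, randSubsetProb (Icc 2 n) p ({q.1, q.2, q.1 * q.2} ⊆ ·) :=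
        randSubsetProb_le_sum_of_cover hp _ _ hcover
    _ = ∑ q ∈ productPairs n, if q.1 = q.2 then p ^ 2 else p ^ 3 := by
        refine sum_congr rfl fun q hq => ?_
        obtain ⟨h1, h2, -⟩ := mem_productPairs.1 hq
        rw [randSubsetProb_superset (htriple q hq), card_schurTriple h1 h2, apply_ite (p ^ ·)]
    _ = #{q ∈ productPairs n | q.1 = q.2} * p ^ 2
          + #{q ∈ productPairs n | ¬q.1 = q.2} * p ^ 3 := by
        rw [sum_ite, sum_const, sum_const, nsmul_eq_mul, nsmul_eq_mul]
    _ ≤ √n * p ^ 2 + n * log n * p ^ 3 := by gcongr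
    _ = p ^ 3 * n * log n + p ^ 2 * √n := by ring

/-- If `p³ n log n → 0` and `p² √n → 0` then whp `[2,n]_p` contains no product Schur
triple. -/
theorem stmt12 (p : ℕ → ℝ) (hp : ∀ n, p n ∈ Set.Icc (0 : ℝ) 1)
    (h1 : Filter.Tendsto (fun n : ℕ => p n ^ 3 * n * Real.log n) Filter.atTop (nhds 0))
    (h2 : Filter.Tendsto (fun n : ℕ => p n ^ 2 * Real.sqrt n) Filter.atTop (nhds 0)) :
    Filter.Tendsto (fun n : ℕ =>
        randProb n (p n) (fun A => ∃ a ∈ A, ∃ b ∈ A, a * b ∈ A))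
      Filter.atTop (nhds 0) := by
  refine squeeze_zero (fun n => ?_) (fun n => randProb_schurTriple_le n (hp n)) ?_
  · rw [randProb_eq_randSubsetProb]
    exact randSubsetProb_nonneg (hp n) _
  · simpa using h1.add h2
end

section
/- The threshold for the random set [2,n]_p to contain a product Schur triple is (n log n)^{-1/3}: if p ≪ (n log n)^{-1/3} then with high probability [2,n]_p contains no a,b,c (not necessarily distinct) with a*b=c, and if p ≫ (n log n)^{-1/3} then with high probability it contains such a triple. -/
open Finset Filter

namespace ProductSchurTriple

section RandomSubset

variable {α : Type*} (s : Finset α) (p : ℝ)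

noncomputable def weight (A : Finset α) : ℝ := p ^ #A * (1 - p) ^ (#s - #A)

-- `randProb n p` is `subsetProb (Icc 2 n) p` by definition; this is used silently below.
open scoped Classical in
noncomputable def subsetProb (P : Finset α → Prop) : ℝ :=
  ∑ A ∈ s.powerset, if P A then weight s p A else 0

lemma sum_weight : ∑ A ∈ s.powerset, weight s p A = 1 := by
  simp [weight, sum_pow_mul_eq_add_pow]

variable {s p}

lemma weight_nonneg (hp : p ∈ Set.Icc (0 : ℝ) 1) (A : Finset α) : 0 ≤ weight s p A :=
  mul_nonneg (pow_nonneg hp.1 _) (pow_nonneg (sub_nonneg.2 hp.2) _)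

lemma subsetProb_nonneg (hp : p ∈ Set.Icc (0 : ℝ) 1) (P : Finset α → Prop) :
    0 ≤ subsetProb s p P :=
  sum_nonneg fun A _ => by split_ifs <;> simp [weight_nonneg hp]

lemma subsetProb_add_subsetProb_not (P : Finset α → Prop) :
    subsetProb s p P + subsetProb s p (fun A => ¬ P A) = 1 := by
  rw [subsetProb, subsetProb, ← sum_add_distrib, ← sum_weight s p]
  exact sum_congr rfl fun A _ => by split_ifs <;> simp_all

variable [DecidableEq α]

lemma sum_weight_filter_superset {T : Finset α} (hT : T ⊆ s) :
    ∑ A ∈ s.powerset with T ⊆ A, weight s p A = p ^ #T := by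
  rw [← Icc_eq_filter_powerset, Icc_eq_image_powerset hT, sum_image]
  · calc ∑ B ∈ (s \ T).powerset, weight s p (T ∪ B)
        = ∑ B ∈ (s \ T).powerset, p ^ #T * weight (s \ T) p B := by
          refine sum_congr rfl fun B hB => ?_
          have hdisj : Disjoint T B := disjoint_sdiff.mono_right (mem_powerset.1 hB)
          have hB : #B ≤ #s - #T := card_sdiff_of_subset hT ▸ card_le_card (mem_powerset.1 hB)
          rw [weight, weight, card_union_of_disjoint hdisj, card_sdiff_of_subset hT, pow_add,
            show #s - (#T + #B) = #s - #T - #B by omega, mul_assoc]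
      _ = p ^ #T := by rw [← mul_sum, sum_weight, mul_one]
  · intro B hB B' hB' h
    rw [mem_coe, mem_powerset] at hB hB'
    simp only at h
    rw [← union_sdiff_cancel_left (disjoint_sdiff.mono_right hB), h,
      union_sdiff_cancel_left (disjoint_sdiff.mono_right hB')]

lemma sum_weight_mul_card_filter_subset {ι : Type*} (Q : Finset ι) (T : ι → Finset α)
    (hT : ∀ q ∈ Q, T q ⊆ s) :
    ∑ A ∈ s.powerset, weight s p A * #{q ∈ Q | T q ⊆ A} = ∑ q ∈ Q, p ^ #(T q) := by
  simp only [card_filter, Nat.cast_sum, mul_sum, Nat.cast_ite, Nat.cast_one, Nat.cast_zero,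
    mul_ite, mul_one, mul_zero]
  rw [sum_comm]
  exact sum_congr rfl fun q hq => by rw [← sum_filter, sum_weight_filter_superset (hT q hq)]

variable {ι : Type*} {Q : Finset ι} {T : ι → Finset α} {P : Finset α → Prop}

lemma subsetProb_le_sum_pow_card (hp : p ∈ Set.Icc (0 : ℝ) 1) (hT : ∀ q ∈ Q, T q ⊆ s)
    (hP : ∀ A ⊆ s, P A → ∃ q ∈ Q, T q ⊆ A) :
    subsetProb s p P ≤ ∑ q ∈ Q, p ^ #(T q) := by
  rw [← sum_weight_mul_card_filter_subset Q T hT]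
  refine sum_le_sum fun A hA => ?_
  split_ifs with hPA
  · obtain ⟨q, hq, hqA⟩ := hP A (mem_powerset.1 hA) hPA
    have : (1 : ℝ) ≤ #{q ∈ Q | T q ⊆ A} :=
      Nat.one_le_cast.2 (card_pos.2 ⟨q, mem_filter.2 ⟨hq, hqA⟩⟩)
    nlinarith [weight_nonneg (s := s) hp A]
  · exact mul_nonneg (weight_nonneg hp A) (Nat.cast_nonneg _)

lemma subsetProb_not_le_variance_div_sq (hp : p ∈ Set.Icc (0 : ℝ) 1) (hT : ∀ q ∈ Q, T q ⊆ s)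
    (hP : ∀ A, ∀ q ∈ Q, T q ⊆ A → P A) (hμ : 0 < ∑ q ∈ Q, p ^ #(T q)) :
    subsetProb s p (fun A => ¬ P A) ≤
      (∑ q ∈ Q, ∑ q' ∈ Q, p ^ #(T q ∪ T q') - (∑ q ∈ Q, p ^ #(T q)) ^ 2) /
        (∑ q ∈ Q, p ^ #(T q)) ^ 2 := by
  set μ := ∑ q ∈ Q, p ^ #(T q)
  set X : Finset α → ℝ := fun A => #{q ∈ Q | T q ⊆ A}
  have hX : ∑ A ∈ s.powerset, weight s p A * X A = μ :=
    sum_weight_mul_card_filter_subset Q T hT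
  have hX2 : ∑ A ∈ s.powerset, weight s p A * X A ^ 2 =
      ∑ q ∈ Q, ∑ q' ∈ Q, p ^ #(T q ∪ T q') := by
    have hsq : ∀ A, X A ^ 2 = #{r ∈ Q ×ˢ Q | T r.1 ∪ T r.2 ⊆ A} := fun A => by
      simp only [X, union_subset_iff]
      rw [sq, ← Nat.cast_mul, ← card_product, ← filter_product]
    simp only [hsq]
    rw [sum_weight_mul_card_filter_subset (Q ×ˢ Q) _
      fun r hr => union_subset (hT _ (mem_product.1 hr).1) (hT _ (mem_product.1 hr).2),
      sum_product]
  calc subsetProb s p (fun A => ¬ P A)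
      ≤ ∑ A ∈ s.powerset, weight s p A * (X A - μ) ^ 2 / μ ^ 2 := sum_le_sum fun A _ => by
        split_ifs with hPA
        · have : X A = 0 := by
            simp only [X, Nat.cast_eq_zero, card_eq_zero, filter_eq_empty_iff]
            exact fun q hq hqA => hPA (hP A q hq hqA)
          rw [this, zero_sub, neg_sq, mul_div_assoc, div_self (by positivity), mul_one]
        · exact div_nonneg (mul_nonneg (weight_nonneg hp A) (sq_nonneg _)) (sq_nonneg _)
    _ = (∑ A ∈ s.powerset, (weight s p A * X A ^ 2 - 2 * μ * (weight s p A * X A)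
          + μ ^ 2 * weight s p A)) / μ ^ 2 := by
        rw [← sum_div]
        exact congr_arg (· / μ ^ 2) (sum_congr rfl fun A _ => by ring)
    _ = _ := by
        rw [sum_add_distrib, sum_sub_distrib, ← mul_sum, ← mul_sum, hX, hX2, sum_weight]
        ring

end RandomSubset

def HasProductTriple (A : Finset ℕ) : Prop := ∃ a ∈ A, ∃ b ∈ A, a * b ∈ A

def schurTriple (q : Σ _ : ℕ, ℕ) : Finset ℕ := {q.1, q.2, q.1 * q.2}

lemma schurTriple_subset_iff {q : Σ _ : ℕ, ℕ} {A : Finset ℕ} :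
    schurTriple q ⊆ A ↔ q.1 ∈ A ∧ q.2 ∈ A ∧ q.1 * q.2 ∈ A := by
  simp [schurTriple, insert_subset_iff]

lemma hasProductTriple_of_schurTriple_subset {q : Σ _ : ℕ, ℕ} {A : Finset ℕ}
    (h : schurTriple q ⊆ A) : HasProductTriple A :=
  let ⟨ha, hb, hab⟩ := schurTriple_subset_iff.1 h
  ⟨_, ha, _, hb, hab⟩

lemma card_schurTriple_of_ne {a b : ℕ} (ha : 2 ≤ a) (hb : 2 ≤ b) (hab : a ≠ b) :
    #(schurTriple ⟨a, b⟩) = 3 := by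
  have hb' : b < a * b := by nlinarith
  have ha' : a < a * b := by nlinarith
  rw [schurTriple, card_insert_of_notMem, card_pair hb'.ne]
  simp [hab, ha'.ne]

lemma card_schurTriple_self {a : ℕ} (ha : 2 ≤ a) : #(schurTriple ⟨a, a⟩) = 2 := by
  rw [schurTriple, insert_idem, card_pair]
  nlinarith

lemma sum_Ioc_inv_eq_harmonic_sub {m M : ℕ} (h : m ≤ M) :
    ∑ a ∈ Ioc m M, (a : ℝ)⁻¹ = harmonic M - harmonic m := by
  have harm (k : ℕ) : (harmonic k : ℝ) = ∑ a ∈ Ioc 0 k, (a : ℝ)⁻¹ := by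
    simp [harmonic_eq_sum_Icc, ← Icc_add_one_left_eq_Ioc]
  rw [harm, harm, ← sum_Ioc_consecutive _ m.zero_le h, add_sub_cancel_left]

lemma sum_Ioc_one_inv_le_log (n : ℕ) : ∑ a ∈ Ioc 1 n, (a : ℝ)⁻¹ ≤ Real.log n := by
  rcases Nat.eq_zero_or_pos n with rfl | hn
  · simp
  rw [sum_Ioc_inv_eq_harmonic_sub hn]
  linarith [harmonic_le_one_add_log n, show (harmonic 1 : ℝ) = 1 by simp]

def schurPairs (n : ℕ) : Finset (Σ _ : ℕ, ℕ) := (Icc 2 n).sigma fun a => Icc 2 (n / a)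

lemma mem_schurPairs {n a b : ℕ} : ⟨a, b⟩ ∈ schurPairs n ↔ 2 ≤ a ∧ 2 ≤ b ∧ a * b ≤ n := by
  simp only [schurPairs, mem_sigma, mem_Icc]
  constructor
  · rintro ⟨⟨ha, -⟩, hb, hbn⟩
    exact ⟨ha, hb, mul_comm a b ▸ (Nat.le_div_iff_mul_le (by omega)).1 hbn⟩
  · rintro ⟨ha, hb, hab⟩
    exact ⟨⟨ha, by nlinarith⟩, hb, (Nat.le_div_iff_mul_le (by omega)).2 (mul_comm a b ▸ hab)⟩

lemma schurTriple_subset_Icc {n : ℕ} {q : Σ _ : ℕ, ℕ} (hq : q ∈ schurPairs n) :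
    schurTriple q ⊆ Icc 2 n := by
  obtain ⟨a, b⟩ := q
  obtain ⟨ha, hb, hab⟩ := mem_schurPairs.1 hq
  simp only [schurTriple_subset_iff, mem_Icc]
  refine ⟨⟨ha, ?_⟩, ⟨hb, ?_⟩, ⟨?_, hab⟩⟩ <;> nlinarith

lemma exists_schurPairs_of_hasProductTriple {n : ℕ} {A : Finset ℕ} (hA : A ⊆ Icc 2 n)
    (h : HasProductTriple A) : ∃ q ∈ schurPairs n, schurTriple q ⊆ A := by
  obtain ⟨a, ha, b, hb, hab⟩ := h
  have hmem := fun x (hx : x ∈ A) => mem_Icc.1 (hA hx)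
  exact ⟨⟨a, b⟩, mem_schurPairs.2 ⟨(hmem a ha).1, (hmem b hb).1, (hmem _ hab).2⟩,
    schurTriple_subset_iff.2 ⟨ha, hb, hab⟩⟩

lemma card_schurPairs_le (n : ℕ) : (#(schurPairs n) : ℝ) ≤ n * Real.log n := by
  calc (#(schurPairs n) : ℝ) = ∑ a ∈ Ioc 1 n, ((n / a + 1 - 2 : ℕ) : ℝ) := by
        simp [schurPairs, card_sigma, ← Icc_add_one_left_eq_Ioc]
    _ ≤ ∑ a ∈ Ioc 1 n, (n : ℝ) * (a : ℝ)⁻¹ := sum_le_sum fun a _ =>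
        (Nat.cast_le.2 (by generalize n / a = k; omega : n / a + 1 - 2 ≤ n / a)).trans
          Nat.cast_div_le
    _ ≤ n * Real.log n := by
        rw [← mul_sum]
        exact mul_le_mul_of_nonneg_left (sum_Ioc_one_inv_le_log n) n.cast_nonneg

lemma card_filter_schurPairs_fst_eq_snd_le (n : ℕ) :
    #{q ∈ schurPairs n | q.1 = q.2} ≤ Nat.sqrt n := by
  calc #{q ∈ schurPairs n | q.1 = q.2} ≤ #(Icc 1 (Nat.sqrt n)) := by
        refine card_le_card_of_injOn (·.1) (fun q hq => ?_) fun q hq q' hq' h => ?_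
        · obtain ⟨hq, hdiag⟩ := mem_filter.1 hq
          obtain ⟨a, b⟩ := q
          obtain ⟨ha, -, hab⟩ := mem_schurPairs.1 hq
          simp only at hdiag
          subst hdiag
          simpa [Nat.le_sqrt] using ⟨by omega, hab⟩
        · exact Sigma.ext h
            (heq_of_eq ((mem_filter.1 hq).2.symm.trans (h.trans (mem_filter.1 hq').2)))
    _ = Nat.sqrt n := by simp

lemma randProb_hasProductTriple_le {p : ℝ} (hp : p ∈ Set.Icc (0 : ℝ) 1) (n : ℕ) :
    randProb n p HasProductTriple ≤ p ^ 3 * (n * Real.log n) + p ^ 2 * √n := by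
  have hpow (q) (hq : q ∈ schurPairs n) :
      p ^ #(schurTriple q) ≤ p ^ 3 + if q.1 = q.2 then p ^ 2 else 0 := by
    obtain ⟨a, b⟩ := q
    obtain ⟨ha, hb, -⟩ := mem_schurPairs.1 hq
    split_ifs with hab
    · simp only at hab
      subst hab
      rw [card_schurTriple_self ha]
      linarith [pow_nonneg hp.1 3]
    · rw [card_schurTriple_of_ne ha hb hab, add_zero]
  calc randProb n p HasProductTriple ≤ ∑ q ∈ schurPairs n, p ^ #(schurTriple q) :=
        subsetProb_le_sum_pow_card hp (fun q => schurTriple_subset_Icc)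
          fun A hA => exists_schurPairs_of_hasProductTriple hA
    _ ≤ ∑ q ∈ schurPairs n, (p ^ 3 + if q.1 = q.2 then p ^ 2 else 0) := sum_le_sum hpow
    _ = p ^ 3 * #(schurPairs n) + p ^ 2 * #{q ∈ schurPairs n | q.1 = q.2} := by
        rw [sum_add_distrib, sum_ite, sum_const_zero, add_zero, sum_const, sum_const,
          nsmul_eq_mul, nsmul_eq_mul, mul_comm, mul_comm (p ^ 2)]
    _ ≤ p ^ 3 * (n * Real.log n) + p ^ 2 * √n := by
        have := hp.1
        gcongr
        · exact card_schurPairs_le n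
        · exact (Nat.cast_le.2 (card_filter_schurPairs_fst_eq_snd_le n)).trans
            Real.nat_sqrt_le_real_sqrt

lemma one_le_of_log_pos {n : ℕ} (h : 0 < Real.log n) : 1 ≤ n :=
  Nat.one_le_iff_ne_zero.2 fun hn => by simp [hn] at h

noncomputable def invThreshold (n : ℕ) : ℝ := ((n : ℝ) * Real.log n) ^ ((1 : ℝ) / 3)

lemma invThreshold_pow_three (n : ℕ) : invThreshold n ^ 3 = n * Real.log n := by
  have h : (0 : ℝ) ≤ n * Real.log n := mul_nonneg n.cast_nonneg (Real.log_natCast_nonneg n)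
  rw [invThreshold, ← Real.rpow_natCast, ← Real.rpow_mul h]
  norm_num

lemma rpow_le_invThreshold_sq {n : ℕ} (hlog : 1 ≤ Real.log n) {r : ℝ} (hr : r ≤ 2 / 3) :
    (n : ℝ) ^ r ≤ invThreshold n ^ 2 := by
  have hn : (1 : ℝ) ≤ n := Nat.one_le_cast.2 (one_le_of_log_pos (by linarith))
  have hN : (n : ℝ) ≤ n * Real.log n := le_mul_of_one_le_right (by linarith) hlog
  calc (n : ℝ) ^ r ≤ (n : ℝ) ^ ((2 : ℝ) / 3) := Real.rpow_le_rpow_of_exponent_le hn hr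
    _ ≤ ((n : ℝ) * Real.log n) ^ ((2 : ℝ) / 3) := by gcongr
    _ = invThreshold n ^ 2 := by
        rw [invThreshold, ← Real.rpow_natCast, ← Real.rpow_mul (by linarith)]
        norm_num

lemma eventually_le_log (c : ℝ) : ∀ᶠ n : ℕ in atTop, c ≤ Real.log n :=
  (Real.tendsto_log_atTop.comp tendsto_natCast_atTop_atTop).eventually_ge_atTop c

theorem tendsto_randProb_hasProductTriple_zero (p : ℕ → ℝ) (hp : ∀ n, p n ∈ Set.Icc (0 : ℝ) 1)
    (ht : Tendsto (fun n => p n * invThreshold n) atTop (nhds 0)) :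
    Tendsto (fun n => randProb n (p n) HasProductTriple) atTop (nhds 0) := by
  have hbound : ∀ᶠ n in atTop,
      randProb n (p n) HasProductTriple ≤
        (p n * invThreshold n) ^ 3 + (p n * invThreshold n) ^ 2 := by
    filter_upwards [eventually_le_log 1] with n hlog
    refine (randProb_hasProductTriple_le (hp n) n).trans ?_
    rw [mul_pow, mul_pow, invThreshold_pow_three, Real.sqrt_eq_rpow]
    have := (hp n).1
    gcongr
    exact rpow_le_invThreshold_sq hlog (by norm_num)
  refine squeeze_zero' (Eventually.of_forall fun n => subsetProb_nonneg (hp n) _) hbound ?_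
  simpa using (ht.pow 3).add (ht.pow 2)

/-- The exponent `2/5` lies in `(1/3, 1/2)`: above `1/3`, so that a triple of `goodPairs n` meets
only `O(n^(3/5)) = o((n log n)^(2/3))` others; below `1/2`, so that `goodPairs n` still has
`≍ n log n` elements. -/
noncomputable def cutoff (n : ℕ) : ℕ := ⌊(n : ℝ) ^ ((2 : ℝ) / 5)⌋₊

lemma one_le_cutoff {n : ℕ} (hn : 1 ≤ n) : 1 ≤ cutoff n :=
  Nat.le_floor (by simpa using Real.one_le_rpow (Nat.one_le_cast.2 hn) (by norm_num))

lemma cutoff_le_sqrt (n : ℕ) : cutoff n ≤ Nat.sqrt n := by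
  rcases Nat.eq_zero_or_pos n with rfl | hn
  · simp [cutoff]
  refine Nat.le_sqrt'.2 ((Nat.cast_le (α := ℝ)).1 ?_)
  calc ((cutoff n ^ 2 : ℕ) : ℝ) ≤ ((n : ℝ) ^ ((2 : ℝ) / 5)) ^ 2 := by
        push_cast; gcongr; exact Nat.floor_le (by positivity)
    _ ≤ ((n : ℝ) ^ ((1 : ℝ) / 2)) ^ 2 := pow_le_pow_left₀ (by positivity)
        (Real.rpow_le_rpow_of_exponent_le (Nat.one_le_cast.2 hn) (by norm_num)) 2
    _ = n := by rw [← Real.sqrt_eq_rpow, Real.sq_sqrt n.cast_nonneg]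

lemma lt_cutoff_add_one_pow_four (n : ℕ) : n < (cutoff n + 1) ^ 4 := by
  rcases Nat.eq_zero_or_pos n with rfl | hn
  · simp
  refine (Nat.cast_lt (α := ℝ)).1 ?_
  calc (n : ℝ) ≤ ((n : ℝ) ^ ((2 : ℝ) / 5)) ^ 4 := by
        rw [← Real.rpow_natCast, ← Real.rpow_mul n.cast_nonneg]
        conv_lhs => rw [← Real.rpow_one (n : ℝ)]
        exact Real.rpow_le_rpow_of_exponent_le (Nat.one_le_cast.2 hn) (by norm_num)
    _ < ((cutoff n + 1) ^ 4 : ℕ) := by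
        push_cast
        gcongr
        exact Nat.lt_floor_add_one _

lemma lt_cutoff_add_one_sq_mul (n : ℕ) : n < (cutoff n + 1) ^ 2 * (Nat.sqrt n + 1) := by
  refine lt_of_pow_lt_pow_left₀ 2 (Nat.zero_le _) ?_
  calc n ^ 2 = n * n := sq n
    _ < (cutoff n + 1) ^ 4 * (Nat.sqrt n + 1) ^ 2 :=
        Nat.mul_lt_mul'' (lt_cutoff_add_one_pow_four n) (sq (Nat.sqrt n + 1) ▸ Nat.lt_succ_sqrt n)
    _ = ((cutoff n + 1) ^ 2 * (Nat.sqrt n + 1)) ^ 2 := by ring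

noncomputable def goodPairs (n : ℕ) : Finset (Σ _ : ℕ, ℕ) :=
  (Ioc (cutoff n) (Nat.sqrt n)).sigma fun a => Ioc (Nat.sqrt n) (n / a)

lemma goodPairs_bounds {n a b : ℕ} (hq : ⟨a, b⟩ ∈ goodPairs n) :
    2 ≤ a ∧ a ≤ Nat.sqrt n ∧ Nat.sqrt n < b ∧ b ≤ n / (cutoff n + 1) ∧
      n / (cutoff n + 1) < a * b ∧ a * b ≤ n := by
  simp only [goodPairs, mem_sigma, mem_Ioc] at hq
  obtain ⟨⟨hca, has⟩, hsb, hba⟩ := hq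
  have hn : 1 ≤ n := by
    by_contra h
    simp_all
  have h1c := one_le_cutoff hn
  refine ⟨by omega, has, hsb, hba.trans (Nat.div_le_div_left hca (by omega)), ?_,
    mul_comm a b ▸ (Nat.le_div_iff_mul_le (by omega)).1 hba⟩
  calc n / (cutoff n + 1) < (cutoff n + 1) * (Nat.sqrt n + 1) := by
        rw [Nat.div_lt_iff_lt_mul (by omega)]
        linarith [lt_cutoff_add_one_sq_mul n]
    _ ≤ a * b := Nat.mul_le_mul hca hsb

lemma goodPairs_subset_schurPairs (n : ℕ) : goodPairs n ⊆ schurPairs n := by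
  rintro ⟨a, b⟩ hq
  obtain ⟨ha, has, hsb, -, -, hab⟩ := goodPairs_bounds hq
  exact mem_schurPairs.2 ⟨ha, by omega, hab⟩

lemma card_schurTriple_of_mem_goodPairs {n : ℕ} {q : Σ _ : ℕ, ℕ} (hq : q ∈ goodPairs n) :
    #(schurTriple q) = 3 := by
  obtain ⟨a, b⟩ := q
  obtain ⟨ha, has, hsb, -⟩ := goodPairs_bounds hq
  exact card_schurTriple_of_ne ha (by omega) (by omega)

lemma eq_of_mem_schurTriple_of_mem_goodPairs {n : ℕ} {q q' : Σ _ : ℕ, ℕ}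
    (hq : q ∈ goodPairs n) (hq' : q' ∈ goodPairs n) {x : ℕ}
    (hx : x ∈ schurTriple q) (hx' : x ∈ schurTriple q') :
    (x = q.1 ∧ q.1 = q'.1) ∨ (x = q.2 ∧ q.2 = q'.2) ∨
      (x = q.1 * q.2 ∧ q.1 * q.2 = q'.1 * q'.2) := by
  obtain ⟨a, b⟩ := q
  obtain ⟨a', b'⟩ := q'
  have := goodPairs_bounds hq
  have := goodPairs_bounds hq'
  simp only [schurTriple, mem_insert, mem_singleton] at hx hx' ⊢
  omega

lemma card_schurTriple_inter_le_one {n : ℕ} {q q' : Σ _ : ℕ, ℕ}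
    (hq : q ∈ goodPairs n) (hq' : q' ∈ goodPairs n) (hne : q ≠ q') :
    #(schurTriple q ∩ schurTriple q') ≤ 1 := by
  refine card_le_one.2 fun x hx y hy => by_contra fun hxy => hne ?_
  rw [mem_inter] at hx hy
  have hxq := eq_of_mem_schurTriple_of_mem_goodPairs hq hq' hx.1 hx.2
  have hyq := eq_of_mem_schurTriple_of_mem_goodPairs hq hq' hy.1 hy.2
  obtain ⟨a, b⟩ := q
  obtain ⟨a', b'⟩ := q'
  obtain ⟨ha, has, hsb, -⟩ := goodPairs_bounds hq
  simp only [Sigma.mk.injEq, heq_eq_eq] at hxq hyq ⊢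
  rcases hxq with ⟨rfl, h⟩ | ⟨rfl, h⟩ | ⟨rfl, h⟩ <;>
    rcases hyq with ⟨rfl, h'⟩ | ⟨rfl, h'⟩ | ⟨rfl, h'⟩
  -- `x ≠ y` lie at different levels, so two of `a = a'`, `b = b'`, `a * b = a' * b'` hold.
  all_goals first
    | exact absurd rfl hxy
    | exact ⟨h, h'⟩
    | exact ⟨h', h⟩
    | exact ⟨h, Nat.eq_of_mul_eq_mul_left (by omega) (h ▸ h')⟩
    | exact ⟨h', Nat.eq_of_mul_eq_mul_left (by omega) (h' ▸ h)⟩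
    | exact ⟨Nat.eq_of_mul_eq_mul_right (by omega) (h ▸ h'), h⟩
    | exact ⟨Nat.eq_of_mul_eq_mul_right (by omega) (h' ▸ h), h'⟩

lemma card_filter_goodPairs_fst_eq_le (n c : ℕ) :
    #{q ∈ goodPairs n | q.1 = c} ≤ n / (cutoff n + 1) := by
  calc #{q ∈ goodPairs n | q.1 = c} ≤ #(Ioc 0 (n / (cutoff n + 1))) := by
        refine card_le_card_of_injOn (·.2) (fun q hq => ?_) fun q hq q' hq' h => ?_
        · obtain ⟨a, b⟩ := q
          obtain ⟨-, -, hsb, hb, -⟩ := goodPairs_bounds (mem_filter.1 hq).1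
          exact mem_Ioc.2 ⟨(Nat.zero_le _).trans_lt hsb, hb⟩
        · exact Sigma.ext ((mem_filter.1 hq).2.trans (mem_filter.1 hq').2.symm) (heq_of_eq h)
    _ = n / (cutoff n + 1) := by simp

lemma card_filter_goodPairs_le_sqrt {n : ℕ} (f : (Σ _ : ℕ, ℕ) → ℕ)
    (hf : ∀ q ∈ goodPairs n, ∀ q' ∈ goodPairs n, q.1 = q'.1 → f q = f q' → q = q') (c : ℕ) :
    #{q ∈ goodPairs n | f q = c} ≤ Nat.sqrt n := by
  calc #{q ∈ goodPairs n | f q = c} ≤ #(Ioc 0 (Nat.sqrt n)) := by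
        refine card_le_card_of_injOn (·.1) (fun q hq => ?_) fun q hq q' hq' h => ?_
        · obtain ⟨a, b⟩ := q
          obtain ⟨ha, has, -⟩ := goodPairs_bounds (mem_filter.1 hq).1
          exact mem_Ioc.2 ⟨(by omega : 0 < a), has⟩
        · obtain ⟨hq, hfq⟩ := mem_filter.1 hq
          obtain ⟨hq', hfq'⟩ := mem_filter.1 hq'
          exact hf q hq q' hq' h (hfq.trans hfq'.symm)
    _ = Nat.sqrt n := by simp

lemma card_filter_goodPairs_not_disjoint_le {n : ℕ} {q : Σ _ : ℕ, ℕ} (hq : q ∈ goodPairs n) :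
    #{q' ∈ goodPairs n | ¬ Disjoint (schurTriple q) (schurTriple q')} ≤
      n / (cutoff n + 1) + 2 * Nat.sqrt n := by
  have hsub : {q' ∈ goodPairs n | ¬ Disjoint (schurTriple q) (schurTriple q')} ⊆
      {q' ∈ goodPairs n | q'.1 = q.1} ∪ {q' ∈ goodPairs n | q'.2 = q.2} ∪
        {q' ∈ goodPairs n | q'.1 * q'.2 = q.1 * q.2} := by
    intro q' hq'
    obtain ⟨hq', hdisj⟩ := mem_filter.1 hq'
    obtain ⟨x, hx, hx'⟩ := not_disjoint_iff.1 hdisj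
    simp only [mem_union, mem_filter, hq', true_and]
    rcases eq_of_mem_schurTriple_of_mem_goodPairs hq hq' hx hx' with h | h | h
    exacts [Or.inl (Or.inl h.2.symm), Or.inl (Or.inr h.2.symm), Or.inr h.2.symm]
  have hsnd := card_filter_goodPairs_le_sqrt (n := n) (·.2)
    (fun q _ q' _ h1 h2 => Sigma.ext h1 (heq_of_eq h2)) q.2
  have hpos : ∀ q ∈ goodPairs n, 0 < q.1 := fun ⟨_, _⟩ hq =>
    two_pos.trans_le (goodPairs_bounds hq).1
  have hprod := card_filter_goodPairs_le_sqrt (n := n) (fun q => q.1 * q.2)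
    (fun q hq q' _ h1 h2 => Sigma.ext h1
      (heq_of_eq (Nat.eq_of_mul_eq_mul_left (hpos q hq) (h1 ▸ h2)))) (q.1 * q.2)
  have hfst := card_filter_goodPairs_fst_eq_le n q.1
  calc _ ≤ _ := card_le_card hsub
    _ ≤ _ := (card_union_le _ _).trans (Nat.add_le_add_right (card_union_le _ _) _)
    _ ≤ _ := by omega

lemma pow_card_schurTriple_union_le {p : ℝ} (hp : p ∈ Set.Icc (0 : ℝ) 1) {n : ℕ}
    {q q' : Σ _ : ℕ, ℕ} (hq : q ∈ goodPairs n) (hq' : q' ∈ goodPairs n) :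
    p ^ #(schurTriple q ∪ schurTriple q') ≤ (if q' = q then p ^ 3 else 0) +
      (if ¬ Disjoint (schurTriple q) (schurTriple q') then p ^ 5 else 0) + p ^ 6 := by
  have h5 := pow_nonneg hp.1 5
  have h6 := pow_nonneg hp.1 6
  have hcard := card_schurTriple_of_mem_goodPairs hq
  have hcard' := card_schurTriple_of_mem_goodPairs hq'
  by_cases heq : q' = q
  · subst heq
    rw [if_pos rfl, union_self, hcard]
    split_ifs <;> linarith
  rw [if_neg heq, zero_add]
  by_cases hdisj : Disjoint (schurTriple q) (schurTriple q')
  · rw [if_neg (not_not.2 hdisj), card_union_of_disjoint hdisj, hcard, hcard', zero_add]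
  · have hunion := card_union_add_card_inter (schurTriple q) (schurTriple q')
    have hinter := card_schurTriple_inter_le_one hq hq' (Ne.symm heq)
    rw [if_pos hdisj]
    linarith [pow_le_pow_of_le_one hp.1 hp.2 (by omega : 5 ≤ #(schurTriple q ∪ schurTriple q'))]

lemma sum_sum_pow_card_schurTriple_union_le {p : ℝ} (hp : p ∈ Set.Icc (0 : ℝ) 1) (n : ℕ) :
    ∑ q ∈ goodPairs n, ∑ q' ∈ goodPairs n, p ^ #(schurTriple q ∪ schurTriple q') ≤
      #(goodPairs n) * (p ^ 3 + p ^ 5 * (n / (cutoff n + 1) + 2 * Nat.sqrt n : ℕ)) +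
        (p ^ 3 * #(goodPairs n)) ^ 2 := by
  have hinner (q) (hq : q ∈ goodPairs n) :
      ∑ q' ∈ goodPairs n, p ^ #(schurTriple q ∪ schurTriple q') ≤
        p ^ 3 + p ^ 5 * (n / (cutoff n + 1) + 2 * Nat.sqrt n : ℕ) + p ^ 6 * #(goodPairs n) := by
    have hK : (#{q' ∈ goodPairs n | ¬ Disjoint (schurTriple q) (schurTriple q')} : ℝ) ≤
        (n / (cutoff n + 1) + 2 * Nat.sqrt n : ℕ) :=
      Nat.cast_le.2 (card_filter_goodPairs_not_disjoint_le hq)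
    calc _ ≤ _ := sum_le_sum fun q' hq' => pow_card_schurTriple_union_le hp hq hq'
      _ = p ^ 3 + p ^ 5 * #{q' ∈ goodPairs n | ¬ Disjoint (schurTriple q) (schurTriple q')} +
            p ^ 6 * #(goodPairs n) := by
          rw [sum_add_distrib, sum_add_distrib, sum_ite_eq', if_pos hq, ← sum_filter, sum_const,
            sum_const, nsmul_eq_mul, nsmul_eq_mul, mul_comm, mul_comm (#(goodPairs n) : ℝ)]
      _ ≤ _ := by gcongr; exact pow_nonneg hp.1 5
  calc _ ≤ ∑ q ∈ goodPairs n,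
        (p ^ 3 + p ^ 5 * (n / (cutoff n + 1) + 2 * Nat.sqrt n : ℕ) + p ^ 6 * #(goodPairs n)) :=
        sum_le_sum hinner
    _ = _ := by rw [sum_const, nsmul_eq_mul]; ring

lemma randProb_not_hasProductTriple_le {p : ℝ} (hp : p ∈ Set.Icc (0 : ℝ) 1) (hp0 : 0 < p)
    {n : ℕ} (hI : 0 < #(goodPairs n)) :
    randProb n p (fun A => ¬ HasProductTriple A) ≤
      (1 + p ^ 2 * (n / (cutoff n + 1) + 2 * Nat.sqrt n : ℕ)) / (p ^ 3 * #(goodPairs n)) := by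
  have hμ : ∑ q ∈ goodPairs n, p ^ #(schurTriple q) = p ^ 3 * #(goodPairs n) := by
    rw [sum_congr rfl fun q hq => by rw [card_schurTriple_of_mem_goodPairs hq], sum_const,
      nsmul_eq_mul, mul_comm]
  have hμ0 : 0 < p ^ 3 * #(goodPairs n) := by positivity
  have hsecond := subsetProb_not_le_variance_div_sq hp
    (fun q hq => schurTriple_subset_Icc (goodPairs_subset_schurPairs n hq))
    (fun A q _ h => hasProductTriple_of_schurTriple_subset (A := A) h) (hμ ▸ hμ0)
  rw [hμ] at hsecond
  refine hsecond.trans ?_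
  calc _ ≤ #(goodPairs n) * (p ^ 3 + p ^ 5 * (n / (cutoff n + 1) + 2 * Nat.sqrt n : ℕ)) /
        (p ^ 3 * #(goodPairs n)) ^ 2 := by
        gcongr
        linarith [sum_sum_pow_card_schurTriple_union_le hp n]
    _ = _ := by field_simp

lemma log_div_ten_sub_one_le_sum_inv {n : ℕ} (hn : 1 ≤ n) :
    Real.log n / 10 - 1 ≤ ∑ a ∈ Ioc (cutoff n) (Nat.sqrt n), (a : ℝ)⁻¹ := by
  have hn' : (0 : ℝ) < n := by exact_mod_cast hn
  have hsqrt : Real.log n / 2 ≤ Real.log (Nat.sqrt n + 1 : ℕ) := by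
    rw [← Real.log_sqrt hn'.le]
    exact Real.log_le_log (Real.sqrt_pos.2 hn')
      (by push_cast; exact Real.real_sqrt_le_nat_sqrt_succ)
  have hcut : Real.log (cutoff n) ≤ 2 / 5 * Real.log n := by
    rw [← Real.log_rpow hn']
    exact Real.log_le_log (by exact_mod_cast one_le_cutoff hn) (Nat.floor_le (by positivity))
  rw [sum_Ioc_inv_eq_harmonic_sub (cutoff_le_sqrt n)]
  linarith [log_add_one_le_harmonic (Nat.sqrt n), harmonic_le_one_add_log (cutoff n)]

lemma card_goodPairs_ge {n : ℕ} (hlog : 60 ≤ Real.log n) :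
    n * Real.log n / 20 ≤ #(goodPairs n) := by
  have hn : 1 ≤ n := one_le_of_log_pos (by linarith)
  set s := Nat.sqrt n
  have hterm (a) (ha : a ∈ Ioc (cutoff n) s) : (n : ℝ) * (a : ℝ)⁻¹ - 1 - s ≤ (n / a - s : ℕ) := by
    obtain ⟨hca, has⟩ := mem_Ioc.1 ha
    have hs : s ≤ n / a := (Nat.le_div_iff_mul_le (by omega)).2
      ((Nat.mul_le_mul_left s has).trans (Nat.sqrt_le n))
    rw [Nat.cast_sub hs, ← div_eq_mul_inv, ← Nat.floor_div_eq_div (K := ℝ)]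
    linarith [Nat.sub_one_lt_floor ((n : ℝ) / a)]
  have hs : (s : ℝ) * (1 + s) ≤ 2 * n := by
    have h1 : s * s ≤ n := Nat.sqrt_le n
    have h2 : s ≤ n := Nat.sqrt_le_self n
    have : s * (1 + s) ≤ 2 * n := by nlinarith
    exact_mod_cast this
  calc n * Real.log n / 20 ≤ n * (Real.log n / 10 - 1) - 2 * n := by nlinarith
    _ ≤ n * ∑ a ∈ Ioc (cutoff n) s, (a : ℝ)⁻¹ - #(Ioc (cutoff n) s) * (1 + s) := by
        gcongr ?_ - ?_
        · exact mul_le_mul_of_nonneg_left (log_div_ten_sub_one_le_sum_inv hn) (by positivity)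
        · refine hs.trans' (mul_le_mul_of_nonneg_right ?_ (by positivity))
          exact_mod_cast (Nat.card_Ioc _ _).trans_le (Nat.sub_le _ _)
    _ = ∑ a ∈ Ioc (cutoff n) s, ((n : ℝ) * (a : ℝ)⁻¹ - 1 - s) := by
        rw [mul_sum, ← nsmul_eq_mul, ← sum_const, ← sum_sub_distrib]
        exact sum_congr rfl fun a _ => by ring
    _ ≤ ∑ a ∈ Ioc (cutoff n) s, ((n / a - s : ℕ) : ℝ) := sum_le_sum hterm
    _ = #(goodPairs n) := by simp [goodPairs, card_sigma, s]

lemma div_cutoff_add_two_sqrt_le {n : ℕ} (hlog : 1 ≤ Real.log n) :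
    ((n / (cutoff n + 1) + 2 * Nat.sqrt n : ℕ) : ℝ) ≤ 3 * invThreshold n ^ 2 := by
  have hn : (0 : ℝ) < n := Nat.cast_pos.2 (one_le_of_log_pos (by linarith))
  have hdiv : ((n / (cutoff n + 1) : ℕ) : ℝ) ≤ (n : ℝ) ^ ((3 : ℝ) / 5) := by
    calc ((n / (cutoff n + 1) : ℕ) : ℝ) ≤ n / (cutoff n + 1 : ℕ) := Nat.cast_div_le
      _ ≤ n / (n : ℝ) ^ ((2 : ℝ) / 5) := by
          push_cast
          exact div_le_div_of_nonneg_left n.cast_nonneg (by positivity)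
            (Nat.lt_floor_add_one _).le
      _ = (n : ℝ) ^ ((3 : ℝ) / 5) := by
          rw [← Real.rpow_one_sub' hn.le (by norm_num)]
          norm_num
  have hsqrt : (Nat.sqrt n : ℝ) ≤ (n : ℝ) ^ ((1 : ℝ) / 2) :=
    Real.sqrt_eq_rpow (n : ℝ) ▸ Real.nat_sqrt_le_real_sqrt
  push_cast
  linarith [rpow_le_invThreshold_sq hlog (r := 3 / 5) (by norm_num),
    rpow_le_invThreshold_sq hlog (r := 1 / 2) (by norm_num)]

lemma randProb_not_hasProductTriple_le_invThreshold {p : ℝ} (hp : p ∈ Set.Icc (0 : ℝ) 1)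
    (hp0 : 0 < p) {n : ℕ} (hlog : 60 ≤ Real.log n) :
    randProb n p (fun A => ¬ HasProductTriple A) ≤
      20 / (p * invThreshold n) ^ 3 + 60 / (p * invThreshold n) := by
  have hn : (1 : ℝ) ≤ n := Nat.one_le_cast.2 (one_le_of_log_pos (by linarith))

  have hI := card_goodPairs_ge hlog

  have hK := div_cutoff_add_two_sqrt_le (n := n) (by linarith)
  calc randProb n p (fun A => ¬ HasProductTriple A)
      ≤ (1 + p ^ 2 * (n / (cutoff n + 1) + 2 * Nat.sqrt n : ℕ)) / (p ^ 3 * #(goodPairs n)) :=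
        randProb_not_hasProductTriple_le hp hp0 (Nat.cast_pos.1 (hI.trans_lt' (by positivity)))
    _ ≤ (1 + p ^ 2 * (3 * invThreshold n ^ 2)) / (p ^ 3 * (invThreshold n ^ 3 / 20)) := by
        rw [invThreshold_pow_three]
        gcongr
    _ = 20 / (p * invThreshold n) ^ 3 + 60 / (p * invThreshold n) := by
        field_simp
        ring

theorem tendsto_randProb_hasProductTriple_one (p : ℕ → ℝ) (hp : ∀ n, p n ∈ Set.Icc (0 : ℝ) 1)
    (ht : Tendsto (fun n => p n * invThreshold n) atTop atTop) :
    Tendsto (fun n => randProb n (p n) HasProductTriple) atTop (nhds 1) := by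
  have hbound : ∀ᶠ n in atTop, randProb n (p n) (fun A => ¬ HasProductTriple A) ≤
      20 / (p n * invThreshold n) ^ 3 + 60 / (p n * invThreshold n) := by
    filter_upwards [eventually_le_log 60, ht.eventually_gt_atTop 0] with n hlog ht0
    have hp0 : 0 < p n := pos_of_mul_pos_left ht0 (Real.rpow_nonneg (by positivity) _)
    exact randProb_not_hasProductTriple_le_invThreshold (hp n) hp0 hlog
  have hlim : Tendsto (fun n => 20 / (p n * invThreshold n) ^ 3 + 60 / (p n * invThreshold n))
      atTop (nhds 0) := by
    simpa using (tendsto_const_nhds.div_atTop ((tendsto_pow_atTop three_ne_zero).comp ht)).add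
      (tendsto_const_nhds.div_atTop ht)
  have hnot := squeeze_zero' (Eventually.of_forall fun n => subsetProb_nonneg (hp n) _) hbound hlim
  refine (sub_zero (1 : ℝ) ▸ tendsto_const_nhds.sub hnot).congr fun n =>
    (eq_sub_of_add_eq (subsetProb_add_subsetProb_not HasProductTriple)).symm

end ProductSchurTriple

/-- The threshold for `[2,n]_p` to contain a product Schur triple is `(n log n)^{-1/3}`. -/
theorem stmt16 :
    (∀ p : ℕ → ℝ, (∀ n, p n ∈ Set.Icc (0 : ℝ) 1) →
      Filter.Tendsto (fun n : ℕ => p n * ((n : ℝ) * Real.log n) ^ ((1 : ℝ) / 3))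
        Filter.atTop (nhds 0) →
      Filter.Tendsto (fun n : ℕ => randProb n (p n) (fun A => ∃ a ∈ A, ∃ b ∈ A, a * b ∈ A))
        Filter.atTop (nhds 0)) ∧
    (∀ p : ℕ → ℝ, (∀ n, p n ∈ Set.Icc (0 : ℝ) 1) →
      Filter.Tendsto (fun n : ℕ => p n * ((n : ℝ) * Real.log n) ^ ((1 : ℝ) / 3))
        Filter.atTop Filter.atTop →
      Filter.Tendsto (fun n : ℕ => randProb n (p n) (fun A => ∃ a ∈ A, ∃ b ∈ A, a * b ∈ A))
        Filter.atTop (nhds 1)) :=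
  ⟨ProductSchurTriple.tendsto_randProb_hasProductTriple_zero,
    ProductSchurTriple.tendsto_randProb_hasProductTriple_one⟩
end
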